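/- arXiv:1804.09407 — 5 statements merged into one kernel-verified Lean document; each statement's English description precedes it below -/
import Mathlib

section
/- Let G = (V, E) be a finite graph with at least two vertices. Then exactly one of the following three conditions holds: (1) G is disconnected; (2) the complement of G is disconnected; (3) the quotient graph G / M(G) is prime (where a graph is prime if it has at least four vertices and its only modules are the empty set, the whole vertex set, and the singletons). -/
open SimpleGraph

/-- A module of a graph: every vertex outside `M` is adjacent to all of `M` or to none of `M`. -/
def IsModule {V : Type*} (G : SimpleGraph V) (M : Set V) : Prop :=
  ∀ x ∈ M, ∀ y ∈ M, ∀ z, z ∉ M → (G.Adj x z ↔ G.Adj y z)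

/-- A strong module: a module that overlaps no other module. -/
def IsStrongModule {V : Type*} (G : SimpleGraph V) (M : Set V) : Prop :=
  IsModule G M ∧ ∀ M' : Set V, IsModule G M' → M ⊆ M' ∨ M' ⊆ M ∨ Disjoint M M'

/-- `M(G)`: the inclusion-wise maximal strong modules of `G` that are proper subsets of `V`. -/
def maxStrongModules {V : Type*} (G : SimpleGraph V) : Set (Set V) :=
  {M | IsStrongModule G M ∧ M ≠ Set.univ ∧
    ∀ M' : Set V, IsStrongModule G M' → M' ≠ Set.univ → M ⊆ M' → M = M'}

/-- The quotient graph `G / M(G)`: two (maximal strong) modules are adjacent iff every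
vertex of one is adjacent to every vertex of the other. -/
def quotientGraph {V : Type*} (G : SimpleGraph V) :
    SimpleGraph {M : Set V // M ∈ maxStrongModules G} where
  Adj A B := A ≠ B ∧ ∀ u ∈ A.1, ∀ v ∈ B.1, G.Adj u v
  symm := ⟨fun A B ⟨hne, h⟩ => ⟨hne.symm, fun u hu w hw => (h w hw u hu).symm⟩⟩
  loopless := ⟨fun A h => h.1 rfl⟩

/-- A graph is prime if it has at least four vertices and its only modules are `∅`,
the whole vertex set, and the singletons. -/
def IsPrime {W : Type*} (H : SimpleGraph W) : Prop :=
  4 ≤ Nat.card W ∧ ∀ M : Set W, IsModule H M → M = ∅ ∨ M = Set.univ ∨ ∃ w, M = {w}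

/-!
If `G` is disconnected, every connected component is a proper strong module, so each maximal
strong module lies inside a single component and the quotient has no edges; dually, if `Gᶜ` is
disconnected the quotient is complete. Either way every set of quotient vertices is a module, so
the quotient is not prime.

If `G` and `Gᶜ` are both connected, a module `A` whose complement is also a module must be
trivial, since the edges between `A` and `Aᶜ` are all present or all absent. Two overlapping
proper modules `M`, `M'` covering `V` would give such a pair `M \ M'`, `M'`; hence maximal proper
modules are strong, and they are exactly the maximal strong modules. The union of the parts in a
module of the quotient is a module of `G`, so maximality makes all quotient modules trivial. Two
parts would again split `G` or `Gᶜ`, and every graph on three vertices has a two-element module,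
so there are at least four parts.
-/

section Modules
variable {V : Type*} {G : SimpleGraph V} {M M' A B S : Set V}

lemma isModule_singleton (v : V) : IsModule G {v} := by
  rintro x rfl y rfl z -
  rfl

lemma isModule_compl_iff : IsModule Gᶜ M ↔ IsModule G M := by
  refine forall₂_congr fun x hx => forall₂_congr fun y hy => forall₂_congr fun z hz => ?_
  simp [compl_adj, ne_of_mem_of_not_mem hx hz, ne_of_mem_of_not_mem hy hz, not_iff_not]

lemma IsModule.union (hM : IsModule G M) (hM' : IsModule G M') (h : (M ∩ M').Nonempty) :
    IsModule G (M ∪ M') := by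
  obtain ⟨w, hwM, hwM'⟩ := h
  have hw : ∀ x ∈ M ∪ M', ∀ z ∉ M ∪ M', G.Adj x z ↔ G.Adj w z := by
    rintro x (hx | hx) z hz
    · exact hM x hx w hwM z fun h => hz (.inl h)
    · exact hM' x hx w hwM' z fun h => hz (.inr h)
  intro x hx y hy z hz
  rw [hw x hx z hz, hw y hy z hz]

lemma IsModule.diff (hM : IsModule G M) (hM' : IsModule G M') (h : (M' \ M).Nonempty) :
    IsModule G (M \ M') := by
  obtain ⟨b, hbM', hbM⟩ := h
  rintro x ⟨hxM, hxM'⟩ y ⟨hyM, hyM'⟩ z hz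
  by_cases hzM : z ∈ M
  · have hzM' : z ∈ M' := by_contra fun h => hz ⟨hzM, h⟩
    calc G.Adj x z ↔ G.Adj x b := by rw [adj_comm, hM' z hzM' b hbM' x hxM', adj_comm]
      _ ↔ G.Adj y b := hM x hxM y hyM b hbM
      _ ↔ G.Adj y z := by rw [adj_comm, hM' b hbM' z hzM' y hyM', adj_comm]
  · exact hM x hxM y hyM z hzM

lemma IsModule.adj_iff_of_disjoint (hA : IsModule G A) (hB : IsModule G B) (hAB : Disjoint A B)
    {x x' z z' : V} (hx : x ∈ A) (hx' : x' ∈ A) (hz : z ∈ B) (hz' : z' ∈ B) :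
    G.Adj x z ↔ G.Adj x' z' := by
  rw [hA x hx x' hx' z (Set.disjoint_right.1 hAB hz), adj_comm,
    hB z hz z' hz' x' (Set.disjoint_left.1 hAB hx'), adj_comm]

lemma SimpleGraph.Reachable.exists_adj_mem_notMem {u v : V} (h : G.Reachable u v) (hu : u ∈ S)
    (hv : v ∉ S) : ∃ x ∈ S, ∃ y ∉ S, G.Adj x y := by
  obtain ⟨p⟩ := h
  obtain ⟨d, -, hd₁, hd₂⟩ := p.exists_boundary_dart S hu hv
  exact ⟨_, hd₁, _, hd₂, d.adj⟩

lemma eq_empty_or_eq_univ_of_isModule_compl (hG : G.Connected) (hGc : Gᶜ.Connected)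
    (hA : IsModule G A) (hAc : IsModule G Aᶜ) : A = ∅ ∨ A = Set.univ := by
  by_contra! h
  obtain ⟨⟨a, ha⟩, hAu⟩ := h
  obtain ⟨b, hb⟩ := (Set.ne_univ_iff_exists_notMem A).1 hAu
  have huniform : ∀ x ∈ A, ∀ y ∉ A, G.Adj x y ↔ G.Adj a b := fun x hx y hy =>
    hA.adj_iff_of_disjoint hAc disjoint_compl_right hx ha hy hb
  by_cases hab : G.Adj a b
  · obtain ⟨x, hx, y, hy, hxy⟩ := (hGc.preconnected a b).exists_adj_mem_notMem ha hb
    exact ((compl_adj G x y).1 hxy).2 ((huniform x hx y hy).2 hab)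
  · obtain ⟨x, hx, y, hy, hxy⟩ := (hG.preconnected a b).exists_adj_mem_notMem ha hb
    exact hab ((huniform x hx y hy).1 hxy)

lemma isStrongModule_singleton (v : V) : IsStrongModule G {v} := by
  refine ⟨isModule_singleton v, fun M' _ => ?_⟩
  by_cases h : v ∈ M'
  · exact .inl (Set.singleton_subset_iff.2 h)
  · exact .inr (.inr (Set.disjoint_singleton_left.2 h))

lemma isStrongModule_compl_iff : IsStrongModule Gᶜ M ↔ IsStrongModule G M := by
  simp only [IsStrongModule, isModule_compl_iff]

lemma maxStrongModules_compl : maxStrongModules Gᶜ = maxStrongModules G := by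
  ext M
  simp only [maxStrongModules, Set.mem_ofPred_eq, isStrongModule_compl_iff]

end Modules

section MaxStrongModules
variable {V : Type*} {G : SimpleGraph V} {A B S : Set V}

lemma subset_of_mem_maxStrongModules (hA : A ∈ maxStrongModules G) (hS : IsStrongModule G S)
    (hSu : S ≠ Set.univ) (h : (S ∩ A).Nonempty) : S ⊆ A := by
  obtain hAS | hSA | hdisj := hA.1.2 S hS.1
  · exact (hA.2.2 S hS hSu hAS).ge
  · exact hSA
  · exact absurd (hdisj.symm.inter_eq ▸ h) Set.not_nonempty_empty

lemma eq_of_mem_maxStrongModules (hA : A ∈ maxStrongModules G) (hB : B ∈ maxStrongModules G)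
    {v : V} (hvA : v ∈ A) (hvB : v ∈ B) : A = B :=
  (subset_of_mem_maxStrongModules hB hA.1 hA.2.1 ⟨v, hvA, hvB⟩).antisymm
    (subset_of_mem_maxStrongModules hA hB.1 hB.2.1 ⟨v, hvB, hvA⟩)

lemma nonempty_of_mem_maxStrongModules [Nontrivial V] (hA : A ∈ maxStrongModules G) :
    A.Nonempty := by
  obtain ⟨v⟩ := ‹Nontrivial V›.to_nonempty
  rw [Set.nonempty_iff_ne_empty]
  rintro rfl
  exact Set.singleton_ne_empty v
    (hA.2.2 {v} (isStrongModule_singleton v) (Set.singleton_ne_univ v) (Set.empty_subset _)).symm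

variable {P Q : {M : Set V // M ∈ maxStrongModules G}}

lemma quotientGraph_vertex_eq_of_mem {v : V} (hP : v ∈ P.1) (hQ : v ∈ Q.1) : P = Q :=
  Subtype.ext (eq_of_mem_maxStrongModules P.2 Q.2 hP hQ)

lemma quotientGraph_adj_iff_adj (hPQ : P ≠ Q) {u v : V} (hu : u ∈ P.1) (hv : v ∈ Q.1) :
    (quotientGraph G).Adj P Q ↔ G.Adj u v := by
  have hdisj : Disjoint P.1 Q.1 := Set.disjoint_left.2 fun w hwP hwQ =>
    hPQ (quotientGraph_vertex_eq_of_mem hwP hwQ)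
  refine ⟨fun h => h.2 u hu v hv, fun h => ⟨hPQ, fun u' hu' v' hv' => ?_⟩⟩
  exact (P.2.1.1.adj_iff_of_disjoint Q.2.1.1 hdisj hu hu' hv hv').1 h

lemma isModule_biUnion_of_isModule_quotientGraph
    (hcover : ∀ v, ∃ A ∈ maxStrongModules G, v ∈ A)
    {𝓜 : Set {M : Set V // M ∈ maxStrongModules G}} (h𝓜 : IsModule (quotientGraph G) 𝓜) :
    IsModule G (⋃ P ∈ 𝓜, P.1) := by
  intro x hx y hy z hz
  simp only [Set.mem_iUnion₂] at hx hy
  obtain ⟨P, hP, hxP⟩ := hx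
  obtain ⟨Q, hQ, hyQ⟩ := hy
  obtain ⟨C, hC, hzC⟩ := hcover z
  have hR : (⟨C, hC⟩ : {M : Set V // M ∈ maxStrongModules G}) ∉ 𝓜 := fun h =>
    hz (Set.mem_biUnion h hzC)
  rw [← quotientGraph_adj_iff_adj (ne_of_mem_of_not_mem hP hR) hxP hzC,
    ← quotientGraph_adj_iff_adj (ne_of_mem_of_not_mem hQ hR) hyQ hzC]
  exact h𝓜 P hP Q hQ _ hR

end MaxStrongModules

section Disconnected
variable {V : Type*} {G : SimpleGraph V}

lemma SimpleGraph.ConnectedComponent.isStrongModule_supp (c : G.ConnectedComponent) :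
    IsStrongModule G c.supp := by
  have hmod : IsModule G c.supp := fun x hx y hy z hz =>
    iff_of_false (fun h => hz (c.mem_supp_of_adj_mem_supp hx h))
      (fun h => hz (c.mem_supp_of_adj_mem_supp hy h))
  refine ⟨hmod, fun M' hM' => ?_⟩
  by_cases hdisj : Disjoint c.supp M'
  · exact .inr (.inr hdisj)
  by_cases hsub : M' ⊆ c.supp
  · exact .inr (.inl hsub)
  obtain ⟨x, hxc, hxM'⟩ := Set.not_disjoint_iff.1 hdisj
  obtain ⟨y, hyM', hyc⟩ := Set.not_subset.1 hsub
  refine .inl fun w hwc => by_contra fun hwM' => ?_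
  -- An edge `s t` leaving `M' ∪ c.suppᶜ` has `s ∈ M'` and `t ∈ c.supp \ M'`, so `y ~ t`.
  obtain ⟨s, hs, t, ht, hst⟩ := (c.reachable_of_mem_supp hxc hwc).exists_adj_mem_notMem
    (S := M' ∪ c.suppᶜ) (.inl hxM') (by simp [hwc, hwM'])
  simp only [Set.mem_union, Set.mem_compl_iff, not_or, not_not] at hs ht
  have hsM' : s ∈ M' := hs.resolve_right (not_not.2 ((c.mem_supp_congr_adj hst).2 ht.2))
  exact hyc (c.mem_supp_of_adj_mem_supp ht.2 ((hM' s hsM' y hyM' t ht.1).1 hst).symm)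

lemma SimpleGraph.ConnectedComponent.supp_ne_univ (hG : ¬G.Connected) (c : G.ConnectedComponent) :
    c.supp ≠ Set.univ := by
  intro h
  have : Nonempty V := c.nonempty_supp.to_subtype.map Subtype.val
  exact hG ⟨fun u v => c.reachable_of_mem_supp (h ▸ Set.mem_univ u) (h ▸ Set.mem_univ v)⟩

lemma eq_of_adj_of_not_connected (hG : ¬G.Connected) {A B : Set V}
    (hA : A ∈ maxStrongModules G) (hB : B ∈ maxStrongModules G) {u v : V} (hu : u ∈ A)
    (hv : v ∈ B) (huv : G.Adj u v) : A = B := by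
  set c := G.connectedComponentMk u
  have hcA : c.supp ⊆ A :=
    subset_of_mem_maxStrongModules hA c.isStrongModule_supp (c.supp_ne_univ hG) ⟨u, rfl, hu⟩
  exact eq_of_mem_maxStrongModules hA hB (hcA (c.mem_supp_of_adj_mem_supp rfl huv)) hv

lemma quotientGraph_eq_bot [Nontrivial V] (hG : ¬G.Connected) : quotientGraph G = ⊥ := by
  ext P Q
  simp only [bot_adj, iff_false]
  rintro ⟨hPQ, hall⟩
  obtain ⟨u, hu⟩ := nonempty_of_mem_maxStrongModules P.2
  obtain ⟨v, hv⟩ := nonempty_of_mem_maxStrongModules Q.2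
  exact hPQ (Subtype.ext (eq_of_adj_of_not_connected hG P.2 Q.2 hu hv (hall u hu v hv)))

lemma quotientGraph_eq_top (hGc : ¬Gᶜ.Connected) : quotientGraph G = ⊤ := by
  ext P Q
  simp only [top_adj]
  refine ⟨fun h => h.1, fun hPQ => ⟨hPQ, fun u hu v hv => by_contra fun hnadj => ?_⟩⟩
  have huv : u ≠ v := fun h => hPQ (quotientGraph_vertex_eq_of_mem hu (h ▸ hv))
  have hP : P.1 ∈ maxStrongModules Gᶜ := maxStrongModules_compl.symm ▸ P.2
  have hQ : Q.1 ∈ maxStrongModules Gᶜ := maxStrongModules_compl.symm ▸ Q.2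
  exact hPQ (Subtype.ext (eq_of_adj_of_not_connected hGc hP hQ hu hv ⟨huv, hnadj⟩))

end Disconnected

section TrivialModules
variable {W : Type*} {H : SimpleGraph W}

def HasOnlyTrivialModules (H : SimpleGraph W) : Prop :=
  ∀ M : Set W, IsModule H M → M = ∅ ∨ M = Set.univ ∨ ∃ w, M = {w}

lemma isModule_bot (M : Set W) : IsModule (⊥ : SimpleGraph W) M :=
  fun _ _ _ _ _ _ => Iff.rfl

lemma isModule_top (M : Set W) : IsModule (⊤ : SimpleGraph W) M := fun x hx y hy z hz => by
  simp [ne_of_mem_of_not_mem hx hz, ne_of_mem_of_not_mem hy hz]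

lemma isModule_pair_of_adj_iff {a b c : W} (hc : ∀ w, w = a ∨ w = b ∨ w = c)
    (h : H.Adj a c ↔ H.Adj b c) : IsModule H {a, b} := by
  rintro x hx y hy z hz
  obtain rfl : z = c := by
    rcases hc z with rfl | rfl | rfl <;> simp_all
  rcases hx with rfl | rfl <;> rcases hy with rfl | rfl <;> simp [h]

lemma exists_isModule_pair_of_card_eq_three (H : SimpleGraph W) (h3 : Nat.card W = 3) :
    ∃ a b, a ≠ b ∧ IsModule H {a, b} := by
  classical
  have : Fintype W := @Fintype.ofFinite W (Nat.finite_of_card_ne_zero (by omega))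
  obtain ⟨x, y, z, hxy, hxz, hyz, hU⟩ :=
    Finset.card_eq_three.1 (Finset.card_univ.trans (Fintype.card_eq_nat_card.trans h3))
  have hcover : ∀ w, w = x ∨ w = y ∨ w = z := fun w => by simpa [hU] using Finset.mem_univ w
  -- Some two of the three vertices agree on the third one.
  have hagree :
      (H.Adj x z ↔ H.Adj y z) ∨ (H.Adj x y ↔ H.Adj z y) ∨ (H.Adj y x ↔ H.Adj z x) := by
    rw [H.adj_comm z y, H.adj_comm y x, H.adj_comm z x]
    tauto
  rcases hagree with h | h | h
  · exact ⟨x, y, hxy, isModule_pair_of_adj_iff hcover h⟩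
  · exact ⟨x, z, hxz, isModule_pair_of_adj_iff (fun w => by have := hcover w; tauto) h⟩
  · exact ⟨y, z, hyz, isModule_pair_of_adj_iff (fun w => by have := hcover w; tauto) h⟩

lemma HasOnlyTrivialModules.card_le_two (hH : HasOnlyTrivialModules H) {a b : W} (hab : a ≠ b)
    (h : IsModule H {a, b}) : Nat.card W ≤ 2 := by
  obtain h0 | hU | ⟨w, hw⟩ := hH _ h
  · exact absurd h0 (Set.insert_nonempty a {b}).ne_empty
  · rw [← Set.ncard_univ, ← hU, Set.ncard_pair hab]
  · have ha : a ∈ ({w} : Set W) := hw ▸ Set.mem_insert a {b}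
    have hb : b ∈ ({w} : Set W) := hw ▸ Set.mem_insert_of_mem a rfl
    exact absurd ((Set.mem_singleton_iff.1 ha).trans (Set.mem_singleton_iff.1 hb).symm) hab

lemma not_isPrime_of_forall_isModule (h : ∀ M, IsModule H M) : ¬IsPrime H := by
  rintro ⟨hcard, htriv⟩
  have : Finite W := Nat.finite_of_card_ne_zero (by omega)
  obtain ⟨a, b, hab⟩ := (Finite.one_lt_card_iff_nontrivial (α := W)).1 (by omega)
  have := HasOnlyTrivialModules.card_le_two htriv hab (h _)
  omega

end TrivialModules

section Connected
variable {V : Type*} {G : SimpleGraph V} {M : Set V}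

def IsProperModule (G : SimpleGraph V) (M : Set V) : Prop :=
  IsModule G M ∧ M ≠ Set.univ

lemma Maximal.isStrongModule (hG : G.Connected) (hGc : Gᶜ.Connected)
    (hM : Maximal (IsProperModule G) M) : IsStrongModule G M := by
  refine ⟨hM.1.1, fun M' hM' => ?_⟩
  by_cases hdisj : Disjoint M M'
  · exact .inr (.inr hdisj)
  by_cases hsup : M ⊆ M'
  · exact .inl hsup
  refine .inr (.inl (by_contra fun hsub => ?_))
  have hov : (M ∩ M').Nonempty := Set.not_disjoint_iff_nonempty_inter.1 hdisj
  have hU : M ∪ M' = Set.univ := by_contra fun hU => hsub <|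
    (Set.union_subset_iff.1 (hM.2 ⟨hM.1.1.union hM' hov, hU⟩ Set.subset_union_left)).2
  have hcompl : (M \ M')ᶜ = M' := by
    ext x
    have hx : x ∈ M ∨ x ∈ M' := Set.mem_union .. |>.1 (hU ▸ Set.mem_univ x)
    simp only [Set.mem_compl_iff, Set.mem_sdiff, not_and, not_not]
    tauto
  obtain h | h := eq_empty_or_eq_univ_of_isModule_compl hG hGc
    (hM.1.1.diff hM' (Set.sdiff_nonempty.2 hsub)) (hcompl.symm ▸ hM')
  · exact hsup (Set.sdiff_eq_empty.1 h)
  · obtain ⟨w, -, hw⟩ := hov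
    exact (Set.eq_univ_iff_forall.1 h w).2 hw

variable [Finite V] [Nontrivial V]

lemma exists_maximal_isProperModule_mem (v : V) :
    ∃ M, Maximal (IsProperModule G) M ∧ v ∈ M := by
  obtain ⟨M, hvM, hM⟩ := Finite.exists_le_maximal (p := IsProperModule G)
    ⟨isModule_singleton v, Set.singleton_ne_univ v⟩
  exact ⟨M, hM, hvM rfl⟩

lemma mem_maxStrongModules_iff_maximal (hG : G.Connected) (hGc : Gᶜ.Connected) :
    M ∈ maxStrongModules G ↔ Maximal (IsProperModule G) M := by
  refine ⟨fun hM => ?_, fun hM => ⟨hM.isStrongModule hG hGc, hM.1.2,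
    fun M' hM' hM'u hsub => hM.eq_of_subset ⟨hM'.1, hM'u⟩ hsub⟩⟩
  obtain ⟨v, hv⟩ := nonempty_of_mem_maxStrongModules hM
  obtain ⟨N, hN, hvN⟩ := exists_maximal_isProperModule_mem (G := G) v
  have hNM : N ⊆ M := subset_of_mem_maxStrongModules hM (hN.isStrongModule hG hGc) hN.1.2
    ⟨v, hvN, hv⟩
  exact hN.eq_of_subset ⟨hM.1.1, hM.2.1⟩ hNM ▸ hN

lemma exists_mem_maxStrongModules (hG : G.Connected) (hGc : Gᶜ.Connected) (v : V) :
    ∃ A ∈ maxStrongModules G, v ∈ A := by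
  obtain ⟨M, hM, hvM⟩ := exists_maximal_isProperModule_mem (G := G) v
  exact ⟨M, (mem_maxStrongModules_iff_maximal hG hGc).2 hM, hvM⟩

lemma hasOnlyTrivialModules_quotientGraph (hG : G.Connected) (hGc : Gᶜ.Connected) :
    HasOnlyTrivialModules (quotientGraph G) := by
  intro 𝓜 h𝓜
  by_contra! h
  obtain ⟨⟨P, hP⟩, hU, hsingle⟩ := h
  obtain ⟨Q, hQ, hQP⟩ : ∃ Q ∈ 𝓜, Q ≠ P := by
    by_contra! h
    exact hsingle P (Set.eq_singleton_iff_unique_mem.2 ⟨hP, h⟩)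
  obtain ⟨R, hR⟩ := (Set.ne_univ_iff_exists_notMem 𝓜).1 hU
  have hUne : ⋃ S ∈ 𝓜, S.1 ≠ Set.univ := by
    obtain ⟨r, hr⟩ := nonempty_of_mem_maxStrongModules R.2
    intro h
    obtain ⟨S, hS, hrS⟩ := Set.mem_iUnion₂.1 (h ▸ Set.mem_univ r)
    exact hR (quotientGraph_vertex_eq_of_mem hrS hr ▸ hS)
  have hUmod : IsModule G (⋃ S ∈ 𝓜, S.1) :=
    isModule_biUnion_of_isModule_quotientGraph (exists_mem_maxStrongModules hG hGc) h𝓜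
  have hPU : P.1 = ⋃ S ∈ 𝓜, S.1 :=
    ((mem_maxStrongModules_iff_maximal hG hGc).1 P.2).eq_of_subset ⟨hUmod, hUne⟩
    (Set.subset_biUnion_of_mem (u := fun S => S.1) hP)
  obtain ⟨q, hq⟩ := nonempty_of_mem_maxStrongModules Q.2
  exact hQP (quotientGraph_vertex_eq_of_mem hq (hPU ▸ Set.mem_biUnion hQ hq))

lemma four_le_card_quotientGraph (hG : G.Connected) (hGc : Gᶜ.Connected) :
    4 ≤ Nat.card {M : Set V // M ∈ maxStrongModules G} := by
  have hpart (v : V) : ∃ P : {M : Set V // M ∈ maxStrongModules G}, v ∈ P.1 := by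
    obtain ⟨A, hA, hvA⟩ := exists_mem_maxStrongModules hG hGc v
    exact ⟨⟨A, hA⟩, hvA⟩
  have hcard1 : 1 < Nat.card {M : Set V // M ∈ maxStrongModules G} := by
    obtain ⟨P, -⟩ := hpart (Classical.arbitrary V)
    obtain ⟨w, hw⟩ := (Set.ne_univ_iff_exists_notMem _).1 P.2.2.1
    obtain ⟨Q, hwQ⟩ := hpart w
    exact Finite.one_lt_card_iff_nontrivial.2 ⟨P, Q, fun h => hw (h ▸ hwQ)⟩
  have hcard2 : Nat.card {M : Set V // M ∈ maxStrongModules G} ≠ 2 := by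
    intro h2
    obtain ⟨P, Q, hPQ, hU⟩ := Nat.card_eq_two_iff.1 h2
    have hcompl : P.1ᶜ = Q.1 := by
      ext v
      obtain ⟨R, hvR⟩ := hpart v
      have hR : R = P ∨ R = Q := by simpa [← hU] using Set.mem_univ R
      refine ⟨fun hvP => ?_, fun hvQ hvP => hPQ (quotientGraph_vertex_eq_of_mem hvP hvQ)⟩
      obtain rfl | rfl := hR
      exacts [absurd hvR hvP, hvR]
    obtain h | h := eq_empty_or_eq_univ_of_isModule_compl hG hGc P.2.1.1 (hcompl ▸ Q.2.1.1)
    · exact (nonempty_of_mem_maxStrongModules P.2).ne_empty h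
    · exact P.2.2.1 h
  have hcard3 : Nat.card {M : Set V // M ∈ maxStrongModules G} ≠ 3 := fun h3 => by
    obtain ⟨a, b, hab, hmod⟩ := exists_isModule_pair_of_card_eq_three (quotientGraph G) h3
    have := (hasOnlyTrivialModules_quotientGraph hG hGc).card_le_two hab hmod
    omega
  omega

end Connected

/-- Gallai's theorem: for a graph with at least two vertices, exactly one of the following
holds: (1) `G` is disconnected; (2) its complement is disconnected; (3) the quotient graph
`G / M(G)` is prime. -/
theorem gallai_trichotomy {V : Type*} [Fintype V] (G : SimpleGraph V)
    (h2 : 2 ≤ Fintype.card V) :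
    (¬G.Connected ∧ Gᶜ.Connected ∧ ¬IsPrime (quotientGraph G)) ∨
    (G.Connected ∧ ¬Gᶜ.Connected ∧ ¬IsPrime (quotientGraph G)) ∨
    (G.Connected ∧ Gᶜ.Connected ∧ IsPrime (quotientGraph G)) := by
  have : Nontrivial V := Fintype.one_lt_card_iff_nontrivial.1 h2
  by_cases hG : G.Connected
  · by_cases hGc : Gᶜ.Connected
    · exact .inr (.inr ⟨hG, hGc, four_le_card_quotientGraph hG hGc,
        hasOnlyTrivialModules_quotientGraph hG hGc⟩)
    · refine .inr (.inl ⟨hG, hGc, ?_⟩)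
      rw [quotientGraph_eq_top hGc]
      exact not_isPrime_of_forall_isModule isModule_top
  · refine .inl ⟨hG, G.connected_or_connected_compl.resolve_left hG, ?_⟩
    rw [quotientGraph_eq_bot hG]
    exact not_isPrime_of_forall_isModule isModule_bot
end

section
/- Let M be a module of a graph G = (V, E), let E_M be the edge set of the induced subgraph G[M], and let F_M ⊆ E_M be a maximum matching of G[M]. Let G'_M = (V, (E ∖ E_M) ∪ F_M). Then every maximum matching of G'_M is a maximum matching of G; in particular μ(G'_M) = μ(G). -/
/-
Every matching of `G'_M` is a matching of `G`, so it suffices to turn a matching `N` of `G`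
into a matching of `G'_M` that is at least as large. The edges of `N` inside `M` form a matching
of `G[M]`, so there are at most `|F_M|` of them; trade them for equally many edges `F'` of `F_M`.
The endpoints in `M` of the other edges of `N` avoid the `2|F'|` vertices covered by the inner
edges of `N`, so they can be moved injectively into the `|M| - 2|F'|` vertices of `M` not covered
by `F'`. Since `M` is a module, an edge leaving `M` stays an edge of `G` when its endpoint in `M`
is moved inside `M`, and it does not lie in `G[M]`.
-/

open SimpleGraph

def IsMatching {V : Type*} (G : SimpleGraph V) (F : Set (Sym2 V)) : Prop :=
  F ⊆ G.edgeSet ∧ ∀ e ∈ F, ∀ f ∈ F, ∀ v : V, v ∈ e → v ∈ f → e = f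

def IsMaximumMatching {V : Type*} (G : SimpleGraph V) (F : Set (Sym2 V)) : Prop :=
  IsMatching G F ∧ ∀ F' : Set (Sym2 V), IsMatching G F' → F'.ncard ≤ F.ncard

noncomputable def matchNum {V : Type*} (G : SimpleGraph V) : ℕ :=
  sSup {n | ∃ F : Set (Sym2 V), IsMatching G F ∧ F.ncard = n}

/-- The subgraph of `G` induced by `M`, viewed as a graph on the same vertex set
(all edges have both endpoints in `M`). -/
def inducedOn {V : Type*} (G : SimpleGraph V) (M : Set V) : SimpleGraph V where
  Adj u v := G.Adj u v ∧ u ∈ M ∧ v ∈ M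
  symm := ⟨fun u v ⟨h, hu, hv⟩ => ⟨h.symm, hv, hu⟩⟩
  loopless := ⟨fun v h => G.loopless.irrefl v h.1⟩

open Set

theorem exists_injOn_mapsTo_of_ncard_le {α : Type*} [Finite α] {s t : Set α}
    (h : s.ncard ≤ t.ncard) : ∃ f : α → α, MapsTo f s t ∧ InjOn f s := by
  rcases s.eq_empty_or_nonempty with rfl | ⟨a, -⟩
  · exact ⟨id, mapsTo_empty _ _, injOn_empty _⟩
  · have : Nonempty α := ⟨a⟩
    refine (toFinite s).exists_injOn_of_encard_le ?_
    rw [← (toFinite s).cast_ncard_eq, ← (toFinite t).cast_ncard_eq]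
    exact_mod_cast h

section

variable {V : Type*}

theorem exists_relabel_injOn_avoiding [Finite V] {M A S : Set V} (hAM : A ⊆ M)
    (hle : (S ∩ M).ncard ≤ (M \ A).ncard) :
    ∃ φ : V → V,
      InjOn φ S ∧ MapsTo φ M M ∧ (∀ v ∉ M, φ v = v) ∧ Disjoint (φ '' S) A := by
  classical
  obtain ⟨ψ, hψ, hψinj⟩ := exists_injOn_mapsTo_of_ncard_le hle
  set φ := (S ∩ M).piecewise ψ id
  have hφ_eq : ∀ v ∈ S ∩ M, φ v = ψ v := fun v hv => piecewise_eq_of_mem _ _ _ hv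
  have hφ_id : ∀ v ∉ S ∩ M, φ v = v := fun v hv => piecewise_eq_of_notMem _ _ _ hv
  have hφ_in : ∀ v ∈ S, v ∈ M → φ v ∈ M \ A := fun v hvS hvM =>
    hφ_eq v ⟨hvS, hvM⟩ ▸ hψ ⟨hvS, hvM⟩
  have hφ_out : ∀ v ∉ M, φ v = v := fun v hv => hφ_id v fun h => hv h.2
  have hφ_mem_iff : ∀ v ∈ S, φ v ∈ M ↔ v ∈ M := fun v hv => by
    by_cases hvM : v ∈ M
    · exact iff_of_true (hφ_in v hv hvM).1 hvM
    · rw [hφ_out v hvM]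
  refine ⟨φ, fun v hv w hw hvw => ?_, fun v hv => ?_, hφ_out, ?_⟩
  · by_cases hvM : v ∈ M
    · have hwM : w ∈ M := (hφ_mem_iff w hw).1 (hvw ▸ (hφ_mem_iff v hv).2 hvM)
      rw [hφ_eq v ⟨hv, hvM⟩, hφ_eq w ⟨hw, hwM⟩] at hvw
      exact hψinj ⟨hv, hvM⟩ ⟨hw, hwM⟩ hvw
    · have hwM : w ∉ M := fun hwM =>
        hvM ((hφ_mem_iff v hv).1 (hvw ▸ (hφ_mem_iff w hw).2 hwM))
      rwa [hφ_out v hvM, hφ_out w hwM] at hvw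
  · by_cases hvS : v ∈ S
    · exact (hφ_in v hvS hv).1
    · rwa [hφ_id v fun h => hvS h.1]
  · refine disjoint_left.2 ?_
    rintro _ ⟨v, hv, rfl⟩ hA
    by_cases hvM : v ∈ M
    · exact (hφ_in v hv hvM).2 hA
    · exact hvM (hφ_out v hvM ▸ hAM hA)

def coveredVerts (F : Set (Sym2 V)) : Set V := {v | ∃ e ∈ F, v ∈ e}

theorem coveredVerts_image {W : Type*} (φ : V → W) (F : Set (Sym2 V)) :
    coveredVerts (Sym2.map φ '' F) = φ '' coveredVerts F := by
  ext u
  constructor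
  · rintro ⟨_, ⟨e, he, rfl⟩, hu⟩
    obtain ⟨v, hve, rfl⟩ := Sym2.mem_map.1 hu
    exact ⟨v, ⟨e, he, hve⟩, rfl⟩
  · rintro ⟨v, ⟨e, he, hve⟩, rfl⟩
    exact ⟨_, ⟨e, he, rfl⟩, Sym2.mem_map.2 ⟨v, hve, rfl⟩⟩

theorem disjoint_of_disjoint_coveredVerts {F F' : Set (Sym2 V)}
    (h : Disjoint (coveredVerts F) (coveredVerts F')) : Disjoint F F' :=
  disjoint_left.2 fun e he he' =>
    disjoint_left.1 h ⟨e, he, e.out_fst_mem⟩ ⟨e, he', e.out_fst_mem⟩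

namespace IsMatching

variable {G : SimpleGraph V} {F F' N : Set (Sym2 V)}

theorem mono (hF : IsMatching G F) (h : F' ⊆ F) : IsMatching G F' :=
  ⟨h.trans hF.1, fun e he f hf => hF.2 e (h he) f (h hf)⟩

theorem mono_graph {H : SimpleGraph V} (hF : IsMatching H F) (hHG : H ≤ G) : IsMatching G F :=
  ⟨hF.1.trans (edgeSet_mono hHG), hF.2⟩

theorem inter_edgeSet (hN : IsMatching G N) (H : SimpleGraph V) :
    IsMatching H (N ∩ H.edgeSet) :=
  ⟨inter_subset_right, fun e he f hf => hN.2 e he.1 f hf.1⟩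

theorem union (hF : IsMatching G F) (hF' : IsMatching G F')
    (h : Disjoint (coveredVerts F) (coveredVerts F')) : IsMatching G (F ∪ F') := by
  refine ⟨union_subset hF.1 hF'.1, ?_⟩
  rintro e (he | he) f (hf | hf) v hve hvf
  · exact hF.2 e he f hf v hve hvf
  · exact (disjoint_left.1 h ⟨e, he, hve⟩ ⟨f, hf, hvf⟩).elim
  · exact (disjoint_left.1 h ⟨f, hf, hvf⟩ ⟨e, he, hve⟩).elim
  · exact hF'.2 e he f hf v hve hvf

theorem disjoint_coveredVerts (hN : IsMatching G N) (hF : F ⊆ N) (hF' : F' ⊆ N)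
    (h : Disjoint F F') : Disjoint (coveredVerts F) (coveredVerts F') := by
  rintro S hSF hSF' v hv
  obtain ⟨e, he, hve⟩ := hSF hv
  obtain ⟨f, hf, hvf⟩ := hSF' hv
  rw [hN.2 e (hF he) f (hF' hf) v hve hvf] at he
  exact disjoint_left.1 h he hf

theorem ncard_coveredVerts [Finite V] (hF : IsMatching G F) :
    (coveredVerts F).ncard = 2 * F.ncard := by
  classical
  have hcov : coveredVerts F = ⋃ e ∈ F, {v | v ∈ e} := by
    ext v
    simp [coveredVerts]
  have hdisj : F.PairwiseDisjoint fun e => {v | v ∈ e} := by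
    intro e he f hf hef
    exact disjoint_left.2 fun v hve hvf => hef (hF.2 e he f hf v hve hvf)
  have hpair : ∀ e ∈ F, {v | v ∈ e}.ncard = 2 := by
    intro e he
    have he_fin : {v | v ∈ e} = (e.toFinset : Set V) := by
      ext
      simp [Sym2.mem_toFinset]
    rw [he_fin, ncard_coe_finset,
      Sym2.card_toFinset_of_not_isDiag e (G.not_isDiag_of_mem_edgeSet (hF.1 he))]
  rw [hcov, (toFinite F).ncard_biUnion (fun _ _ => toFinite _) hdisj,
    finsum_mem_congr rfl hpair, ← finsum_one, mul_finsum_mem, mul_one]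

theorem eq_of_mem_map {W : Type*} {φ : V → W} (hN : IsMatching G N)
    (hφ : InjOn φ (coveredVerts N)) {e f : Sym2 V} (he : e ∈ N) (hf : f ∈ N) {u : W}
    (hue : u ∈ e.map φ) (huf : u ∈ f.map φ) : e = f := by
  obtain ⟨v, hve, rfl⟩ := Sym2.mem_map.1 hue
  obtain ⟨w, hwf, hwv⟩ := Sym2.mem_map.1 huf
  obtain rfl := hφ ⟨f, hf, hwf⟩ ⟨e, he, hve⟩ hwv
  exact hN.2 e he f hf w hve hwf

theorem image {W : Type*} {H : SimpleGraph W} {φ : V → W} (hN : IsMatching G N)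
    (hφ : InjOn φ (coveredVerts N)) (hmaps : ∀ e ∈ N, e.map φ ∈ H.edgeSet) :
    IsMatching H (Sym2.map φ '' N) := by
  refine ⟨image_subset_iff.2 hmaps, ?_⟩
  rintro _ ⟨e, he, rfl⟩ _ ⟨f, hf, rfl⟩ u hue huf
  rw [hN.eq_of_mem_map hφ he hf hue huf]

theorem ncard_image {W : Type*} {φ : V → W} (hN : IsMatching G N)
    (hφ : InjOn φ (coveredVerts N)) : (Sym2.map φ '' N).ncard = N.ncard := by
  refine InjOn.ncard_image fun e he f hf hef => ?_
  have hu : φ e.out.1 ∈ e.map φ := Sym2.mem_map.2 ⟨_, e.out_fst_mem, rfl⟩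
  exact hN.eq_of_mem_map hφ he hf hu (hef ▸ hu)

end IsMatching

theorem isMatching_fromEdgeSet_iff {G : SimpleGraph V} {s F : Set (Sym2 V)}
    (hs : s ⊆ G.edgeSet) : IsMatching (fromEdgeSet s) F ↔ F ⊆ s ∧ IsMatching G F := by
  rw [IsMatching, IsMatching, edgeSet_fromEdgeSet, subset_sdiff]
  constructor
  · rintro ⟨⟨hFs, -⟩, hF⟩
    exact ⟨hFs, hFs.trans hs, hF⟩
  · rintro ⟨hFs, -, hF⟩
    refine ⟨⟨hFs, disjoint_left.2 fun e he hdiag => ?_⟩, hF⟩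
    exact G.not_isDiag_of_mem_edgeSet (hs (hFs he)) (Sym2.mem_diagSet.1 hdiag)

theorem matchNum_le_of_forall_exists [Finite V] {G H : SimpleGraph V}
    (h : ∀ F, IsMatching G F → ∃ F', IsMatching H F' ∧ F.ncard ≤ F'.ncard) :
    matchNum G ≤ matchNum H := by
  refine csSup_le ⟨0, ∅, ⟨empty_subset _, by simp⟩, ncard_empty _⟩ ?_
  rintro _ ⟨F, hF, rfl⟩
  obtain ⟨F', hF', hle⟩ := h F hF
  refine hle.trans (le_csSup ⟨Nat.card (Sym2 V), ?_⟩ ⟨F', hF', rfl⟩)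
  rintro _ ⟨F'', -, rfl⟩
  exact ncard_le_card F''

theorem mem_edgeSet_inducedOn {G : SimpleGraph V} {M : Set V} {e : Sym2 V} :
    e ∈ (inducedOn G M).edgeSet ↔ e ∈ G.edgeSet ∧ ∀ v ∈ e, v ∈ M := by
  induction e using Sym2.ind with
  | _ x y => simp [inducedOn]

theorem inducedOn_le (G : SimpleGraph V) (M : Set V) : inducedOn G M ≤ G :=
  fun _ _ h => h.1

theorem coveredVerts_subset_of_subset_edgeSet_inducedOn {G : SimpleGraph V} {M : Set V}
    {F : Set (Sym2 V)} (hF : F ⊆ (inducedOn G M).edgeSet) : coveredVerts F ⊆ M :=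
  fun _ ⟨_, he, hv⟩ => (mem_edgeSet_inducedOn.1 (hF he)).2 _ hv

theorem mem_edgeSet_sdiff_inducedOn {G : SimpleGraph V} {M : Set V} {e : Sym2 V} :
    e ∈ G.edgeSet \ (inducedOn G M).edgeSet ↔ e ∈ G.edgeSet ∧ ∃ v ∈ e, v ∉ M := by
  simp +contextual [mem_edgeSet_inducedOn]

namespace IsModule

variable {G : SimpleGraph V} {M : Set V} {φ : V → V}

theorem adj_map (hM : IsModule G M) (hφM : MapsTo φ M M) (hφ : ∀ v ∉ M, φ v = v) {a b : V}
    (hab : G.Adj a b) (hb : b ∉ M) : G.Adj (φ a) (φ b) := by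
  rw [hφ b hb]
  by_cases ha : a ∈ M
  · exact (hM a ha (φ a) (hφM ha) b hb).1 hab
  · rwa [hφ a ha]

theorem map_mem_edgeSet_sdiff_inducedOn (hM : IsModule G M) (hφM : MapsTo φ M M)
    (hφ : ∀ v ∉ M, φ v = v) {e : Sym2 V} (he : e ∈ G.edgeSet \ (inducedOn G M).edgeSet) :
    e.map φ ∈ G.edgeSet \ (inducedOn G M).edgeSet := by
  obtain ⟨heG, v, hve, hv⟩ := mem_edgeSet_sdiff_inducedOn.1 he
  obtain ⟨w, rfl⟩ := Sym2.mem_iff_exists.1 hve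
  refine mem_edgeSet_sdiff_inducedOn.2
    ⟨(hM.adj_map hφM hφ (G.mem_edgeSet.1 heG).symm hv).symm, φ v, Sym2.mem_mk_left _ _, ?_⟩
  rwa [hφ v hv]

end IsModule

theorem IsModule.exists_matching_replacement_ncard_le [Finite V] {G : SimpleGraph V} {M : Set V}
    (hM : IsModule G M) {FM N : Set (Sym2 V)} (hFM : IsMaximumMatching (inducedOn G M) FM)
    (hN : IsMatching G N) :
    ∃ N', IsMatching G N' ∧ N' ⊆ (G.edgeSet \ (inducedOn G M).edgeSet) ∪ FM ∧
      N.ncard ≤ N'.ncard := by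
  set Nin := N ∩ (inducedOn G M).edgeSet
  set Nout := N \ (inducedOn G M).edgeSet
  obtain ⟨FM', hFM'FM, hcard⟩ := exists_subset_card_eq (hFM.2 Nin (hN.inter_edgeSet _))
  have hFM' : IsMatching G FM' := (hFM.1.mono hFM'FM).mono_graph (inducedOn_le G M)
  have hAM : coveredVerts FM' ⊆ M :=
    coveredVerts_subset_of_subset_edgeSet_inducedOn (hFM'FM.trans hFM.1.1)
  have hCM : coveredVerts Nin ⊆ M :=
    coveredVerts_subset_of_subset_edgeSet_inducedOn inter_subset_right
  have hSC : Disjoint (coveredVerts Nout) (coveredVerts Nin) :=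
    hN.disjoint_coveredVerts sdiff_subset inter_subset_left disjoint_sdiff_inter
  have hle : (coveredVerts Nout ∩ M).ncard ≤ (M \ coveredVerts FM').ncard :=
    calc (coveredVerts Nout ∩ M).ncard
        ≤ (M \ coveredVerts Nin).ncard :=
          ncard_le_ncard fun v hv => ⟨hv.2, disjoint_left.1 hSC hv.1⟩
      _ = M.ncard - 2 * Nin.ncard := by
          rw [ncard_sdiff hCM, (hN.mono inter_subset_left).ncard_coveredVerts]
      _ = (M \ coveredVerts FM').ncard := by
          rw [ncard_sdiff hAM, hFM'.ncard_coveredVerts, hcard]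
  obtain ⟨φ, hφinj, hφM, hφ, hφA⟩ := exists_relabel_injOn_avoiding hAM hle
  have hmaps : ∀ e ∈ Nout, e.map φ ∈ G.edgeSet \ (inducedOn G M).edgeSet := fun e he =>
    hM.map_mem_edgeSet_sdiff_inducedOn hφM hφ ⟨hN.1 he.1, he.2⟩
  have hNout : IsMatching G Nout := hN.mono sdiff_subset
  have hdisj : Disjoint (coveredVerts FM') (coveredVerts (Sym2.map φ '' Nout)) := by
    rw [coveredVerts_image]
    exact hφA.symm
  refine ⟨FM' ∪ Sym2.map φ '' Nout,
    hFM'.union (hNout.image hφinj fun e he => (hmaps e he).1) hdisj,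
    union_subset (hFM'FM.trans subset_union_right)
      (image_subset_iff.2 fun e he => subset_union_left (hmaps e he)), le_of_eq ?_⟩
  calc N.ncard = Nin.ncard + Nout.ncard := (ncard_inter_add_ncard_sdiff_eq_ncard N _).symm
    _ = FM'.ncard + (Sym2.map φ '' Nout).ncard := by rw [hcard, hNout.ncard_image hφinj]
    _ = (FM' ∪ Sym2.map φ '' Nout).ncard :=
      (ncard_union_eq (disjoint_of_disjoint_coveredVerts hdisj)).symm

end

/-- Let `M` be a module of `G`, `E_M` the edge set of `G[M]`, and `F_M ⊆ E_M` a maximum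
matching of `G[M]`. Let `G'_M = (V, (E ∖ E_M) ∪ F_M)`. Then every maximum matching of
`G'_M` is a maximum matching of `G`; in particular `μ(G'_M) = μ(G)`. -/
theorem max_matching_of_module_replacement {V : Type*} [Fintype V]
    (G : SimpleGraph V) (M : Set V) (hM : IsModule G M)
    (FM : Set (Sym2 V)) (hFM : IsMaximumMatching (inducedOn G M) FM) :
    (∀ F : Set (Sym2 V),
      IsMaximumMatching
        (SimpleGraph.fromEdgeSet ((G.edgeSet \ (inducedOn G M).edgeSet) ∪ FM)) F →
      IsMaximumMatching G F) ∧
    matchNum (SimpleGraph.fromEdgeSet ((G.edgeSet \ (inducedOn G M).edgeSet) ∪ FM))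
      = matchNum G := by
  set G' := SimpleGraph.fromEdgeSet ((G.edgeSet \ (inducedOn G M).edgeSet) ∪ FM)
  have hsub : (G.edgeSet \ (inducedOn G M).edgeSet) ∪ FM ⊆ G.edgeSet :=
    union_subset sdiff_subset (hFM.1.1.trans (edgeSet_mono (inducedOn_le G M)))
  have to_G : ∀ F, IsMatching G' F → IsMatching G F :=
    fun F hF => ((isMatching_fromEdgeSet_iff hsub).1 hF).2
  have of_G : ∀ N, IsMatching G N → ∃ N', IsMatching G' N' ∧ N.ncard ≤ N'.ncard := by
    intro N hN
    obtain ⟨N', hN', hN'sub, hle⟩ := hM.exists_matching_replacement_ncard_le hFM hN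
    exact ⟨N', (isMatching_fromEdgeSet_iff hsub).2 ⟨hN'sub, hN'⟩, hle⟩
  refine ⟨fun F hF => ⟨to_G F hF.1, fun N hN => ?_⟩, le_antisymm
    (matchNum_le_of_forall_exists fun F hF => ⟨F, to_G F hF, le_rfl⟩)
    (matchNum_le_of_forall_exists of_G)⟩
  obtain ⟨N', hN', hle⟩ := of_G N hN
  exact hle.trans (hF.2 N' hN')
end

section
/- Let G = (V, E) be a graph and let v and v' be two distinct one-vertex extensions of G that are not twins of each other. Then v' is a one-vertex extension of the graph G − v obtained by deleting v. -/
open SimpleGraph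

/-
Deleting vertices only restricts neighbourhoods: in `G.induce s` the open and closed
neighbourhoods of a vertex are the traces on `s` of those in `G`. Hence each of the six
defining equations of a one-vertex extension `w` survives in `G.induce s`, except that a
pendant or anti-pendant partner outside `s` turns `w` into an isolated or universal vertex,
and a twin partner outside `s` is excluded by hypothesis.
-/

/-- A one-vertex extension: a vertex that is universal, isolated, anti-pendant, pendant,
a true twin, or a false twin. -/
def OneVertexExtension {V : Type*} (G : SimpleGraph V) (v : V) : Prop :=
  (insert v (G.neighborSet v) = Set.univ) ∨
  (G.neighborSet v = ∅) ∨
  (∃ u, u ≠ v ∧ insert v (G.neighborSet v) = {u}ᶜ) ∨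
  (∃ u, u ≠ v ∧ G.neighborSet v = {u}) ∨
  (∃ u, u ≠ v ∧ insert v (G.neighborSet v) = insert u (G.neighborSet u)) ∨
  (∃ u, u ≠ v ∧ G.neighborSet v = G.neighborSet u)

/-- Two distinct vertices are twins if `N[u] = N[v]` or `N(u) = N(v)`. -/
def AreTwins {V : Type*} (G : SimpleGraph V) (u v : V) : Prop :=
  u ≠ v ∧ (insert u (G.neighborSet u) = insert v (G.neighborSet v) ∨
    G.neighborSet u = G.neighborSet v)

namespace Set

variable {V : Type*} {s : Set V}

lemma preimage_val_singleton_of_mem {u : V} (hu : u ∈ s) :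
    ((↑) : s → V) ⁻¹' {u} = {⟨u, hu⟩} := by
  ext ⟨w, hw⟩
  simp [Subtype.ext_iff]

lemma preimage_val_singleton_of_notMem {u : V} (hu : u ∉ s) :
    ((↑) : s → V) ⁻¹' {u} = ∅ := by
  ext ⟨w, hw⟩
  simp only [mem_preimage, mem_singleton_iff, mem_empty_iff_false, iff_false]
  rintro rfl
  exact hu hw

lemma preimage_val_insert (w : s) (t : Set V) :
    ((↑) : s → V) ⁻¹' insert (w : V) t = insert w (((↑) : s → V) ⁻¹' t) := by
  ext x
  simp [Subtype.ext_iff]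

end Set

namespace SimpleGraph

open Set

variable {V : Type*} {s : Set V} (G : SimpleGraph V)

lemma insert_neighborSet_induce (w : s) :
    insert w ((G.induce s).neighborSet w) = (↑) ⁻¹' insert (w : V) (G.neighborSet w) := by
  rw [neighborSet_induce, preimage_val_insert]

theorem OneVertexExtension.induce {w : V} (hw : w ∈ s) (h : OneVertexExtension G w)
    (htwin : ∀ u ∉ s, ¬AreTwins G u w) : OneVertexExtension (G.induce s) ⟨w, hw⟩ := by
  have hne {u : V} (hu : u ∈ s) (huw : u ≠ w) : (⟨u, hu⟩ : s) ≠ ⟨w, hw⟩ :=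
    fun h => huw (congrArg Subtype.val h)
  rcases h with h | h | ⟨u, huw, h⟩ | ⟨u, huw, h⟩ | ⟨u, huw, h⟩ | ⟨u, huw, h⟩
  · refine Or.inl ?_
    rw [insert_neighborSet_induce, h, preimage_univ]
  · refine Or.inr (Or.inl ?_)
    rw [neighborSet_induce, h, preimage_empty]
  · by_cases hu : u ∈ s
    · refine Or.inr (Or.inr (Or.inl ⟨⟨u, hu⟩, hne hu huw, ?_⟩))
      rw [insert_neighborSet_induce, h, preimage_compl,
        preimage_val_singleton_of_mem hu]
    · refine Or.inl ?_
      rw [insert_neighborSet_induce, h, preimage_compl,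
        preimage_val_singleton_of_notMem hu, compl_empty]
  · by_cases hu : u ∈ s
    · refine Or.inr (Or.inr (Or.inr (Or.inl ⟨⟨u, hu⟩, hne hu huw, ?_⟩)))
      rw [neighborSet_induce, h, preimage_val_singleton_of_mem hu]
    · refine Or.inr (Or.inl ?_)
      rw [neighborSet_induce, h, preimage_val_singleton_of_notMem hu]
  · have hu : u ∈ s := by_contra fun hu => htwin u hu ⟨huw, Or.inl h.symm⟩
    refine Or.inr (Or.inr (Or.inr (Or.inr (Or.inl ⟨⟨u, hu⟩, hne hu huw, ?_⟩))))
    rw [insert_neighborSet_induce, insert_neighborSet_induce, h]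
  · have hu : u ∈ s := by_contra fun hu => htwin u hu ⟨huw, Or.inr h.symm⟩
    refine Or.inr (Or.inr (Or.inr (Or.inr (Or.inr ⟨⟨u, hu⟩, hne hu huw, ?_⟩))))
    rw [neighborSet_induce, neighborSet_induce, h]

end SimpleGraph

theorem oneVertexExtension_of_delete_general {V : Type*} (G : SimpleGraph V)
    (v v' : V) (hne : v ≠ v')
    (hv' : OneVertexExtension G v')
    (hnt : ¬AreTwins G v v') :
    OneVertexExtension (G.induce {u : V | u ≠ v}) ⟨v', hne.symm⟩ := by
  exact hv'.induce G hne.symm fun u hu => not_not.mp hu ▸ hnt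

/-- If `v` and `v'` are two distinct one-vertex extensions of `G` that are not twins of
each other, then `v'` is a one-vertex extension of `G − v`. -/
theorem oneVertexExtension_of_delete {V : Type*} [Fintype V] (G : SimpleGraph V)
    (v v' : V) (hne : v ≠ v')
    (hv : OneVertexExtension G v) (hv' : OneVertexExtension G v')
    (hnt : ¬AreTwins G v v') :
    OneVertexExtension (G.induce {u : V | u ≠ v}) ⟨v', hne.symm⟩ :=
  oneVertexExtension_of_delete_general G v v' hne hv' hnt
end

section
/- Every graph G = (V, E) has a unique pruned subgraph up to isomorphism: if H1 and H2 are both pruned subgraphs of G, then H1 and H2 are isomorphic. -/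
/-!
Pruning terminates, so by the argument of Newman's lemma (induction on the current vertex
set) it suffices to show that pruning is locally confluent up to isomorphism. Let `v ≠ w` be
one-vertex extensions of `G[A]`. Deleting `w` leaves `v` a one-vertex extension (a universal,
isolated, pendant or anti-pendant vertex stays one, or becomes universal or isolated) unless
`v` and `w` are twins, and symmetrically. If neither is lost, `A ∖ {v}` and `A ∖ {w}` both
prune to any pruning of `A ∖ {v, w}`. If `v` and `w` are twins, the transposition of `v` and
`w` is an automorphism of `G[A]` carrying `A ∖ {w}` onto `A ∖ {v}`, so it carries prunings of
the one onto prunings of the other.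
-/

open SimpleGraph

def PruneStep {V : Type*} (G : SimpleGraph V) (S T : Set V) : Prop :=
  ∃ (v : V) (h : v ∈ S), OneVertexExtension (G.induce S) ⟨v, h⟩ ∧ T = S \ {v}

def IsPrunedSet {V : Type*} (G : SimpleGraph V) (S : Set V) : Prop :=
  Relation.ReflTransGen (PruneStep G) Set.univ S ∧
  ∀ w : S, ¬OneVertexExtension (G.induce S) w

theorem OneVertexExtension.map {W W' : Type*} {H : SimpleGraph W} {H' : SimpleGraph W'}
    (e : H ≃g H') {v : W} (h : OneVertexExtension H v) : OneVertexExtension H' (e v) := by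
  have hN : ∀ u, ⇑e '' H.neighborSet u = H'.neighborSet (e u) :=
    fun _ => e.image_neighborSet
  have hN' : ∀ u, ⇑e '' insert u (H.neighborSet u) = insert (e u) (H'.neighborSet (e u)) := by
    intro u
    rw [Set.image_insert_eq, hN]
  have hne : ∀ {u}, u ≠ v → e u ≠ e v := e.injective.ne
  rcases h with h | h | ⟨u, hu, h⟩ | ⟨u, hu, h⟩ | ⟨u, hu, h⟩ | ⟨u, hu, h⟩
  · refine .inl ?_
    rw [← hN', h, Set.image_univ, e.surjective.range_eq]
  · refine .inr <| .inl ?_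
    rw [← hN, h, Set.image_empty]
  · refine .inr <| .inr <| .inl ⟨e u, hne hu, ?_⟩
    rw [← hN', h, Set.image_compl_eq e.bijective, Set.image_singleton]
  · refine .inr <| .inr <| .inr <| .inl ⟨e u, hne hu, ?_⟩
    rw [← hN, h, Set.image_singleton]
  · refine .inr <| .inr <| .inr <| .inr <| .inl ⟨e u, hne hu, ?_⟩
    rw [← hN', h, hN']
  · refine .inr <| .inr <| .inr <| .inr <| .inr ⟨e u, hne hu, ?_⟩
    rw [← hN, h, hN]

section Ambient

variable {V : Type*} {G : SimpleGraph V} {A S : Set V} {v w : V}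

def OneVertexExtensionOn (G : SimpleGraph V) (S : Set V) (v : V) : Prop :=
  (∀ x ∈ S, x = v ∨ G.Adj v x) ∨
  (∀ x ∈ S, ¬G.Adj v x) ∨
  (∃ u ∈ S, u ≠ v ∧ ∀ x ∈ S, (x = v ∨ G.Adj v x ↔ x ≠ u)) ∨
  (∃ u ∈ S, u ≠ v ∧ ∀ x ∈ S, (G.Adj v x ↔ x = u)) ∨
  (∃ u ∈ S, u ≠ v ∧ ∀ x ∈ S, (x = v ∨ G.Adj v x ↔ x = u ∨ G.Adj u x)) ∨
  (∃ u ∈ S, u ≠ v ∧ ∀ x ∈ S, (G.Adj v x ↔ G.Adj u x))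

theorem oneVertexExtension_induce_iff (hv : v ∈ S) :
    OneVertexExtension (G.induce S) ⟨v, hv⟩ ↔ OneVertexExtensionOn G S v := by
  unfold OneVertexExtension OneVertexExtensionOn
  refine or_congr ?_ (or_congr ?_ (or_congr ?_ (or_congr ?_ (or_congr ?_ ?_)))) <;>
    simp only [Set.ext_iff, Set.mem_insert_iff, mem_neighborSet, comap_adj,
      Function.Embedding.coe_subtype, Set.mem_univ, iff_true, Set.mem_empty_iff_false, iff_false,
      Set.mem_compl_iff, Set.mem_singleton_iff, Subtype.forall, Subtype.ext_iff, Subtype.exists,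
      ne_eq] <;>
    tauto

theorem OneVertexExtensionOn.sdiff_singleton_or_twins (h : OneVertexExtensionOn G S v)
    (hvw : v ≠ w) :
    OneVertexExtensionOn G (S \ {w}) v ∨ ∀ z ∈ S, z ≠ v → z ≠ w → (G.Adj v z ↔ G.Adj w z) := by
  rcases h with h | h | ⟨u, hu, huv, h⟩ | ⟨u, hu, huv, h⟩ | ⟨u, hu, huv, h⟩ | ⟨u, hu, huv, h⟩
  · exact .inl <| .inl fun x hx => h x hx.1
  · exact .inl <| .inr <| .inl fun x hx => h x hx.1
  all_goals rcases eq_or_ne u w with rfl | huw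
  · exact .inl <| .inl fun x hx => (h x hx.1).2 hx.2
  · exact .inl <| .inr <| .inr <| .inl ⟨u, ⟨hu, huw⟩, huv, fun x hx => h x hx.1⟩
  · exact .inl <| .inr <| .inl fun x hx hvx => hx.2 ((h x hx.1).1 hvx)
  · exact .inl <| .inr <| .inr <| .inr <| .inl ⟨u, ⟨hu, huw⟩, huv, fun x hx => h x hx.1⟩
  · refine .inr fun z hz hzv hzu => ?_
    simpa [hzv, hzu] using h z hz
  · exact .inl <| .inr <| .inr <| .inr <| .inr <| .inl
      ⟨u, ⟨hu, huw⟩, huv, fun x hx => h x hx.1⟩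
  · exact .inr fun z hz _ _ => h z hz
  · exact .inl <| .inr <| .inr <| .inr <| .inr <| .inr
      ⟨u, ⟨hu, huw⟩, huv, fun x hx => h x hx.1⟩

theorem adj_swap_swap_iff [DecidableEq V]
    (htw : ∀ z ∈ A, z ≠ v → z ≠ w → (G.Adj v z ↔ G.Adj w z)) {x y : V} (hx : x ∈ A)
    (hy : y ∈ A) : G.Adj (Equiv.swap v w x) (Equiv.swap v w y) ↔ G.Adj x y := by
  have hx' := htw x hx
  have hy' := htw y hy
  simp only [Equiv.swap_apply_def]
  split_ifs <;> subst_vars <;> simp_all [adj_comm]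

theorem image_swap_sdiff_singleton [DecidableEq V] (hv : v ∈ A) (hw : w ∈ A) (hvw : v ≠ w) :
    Equiv.swap v w '' (A \ {w}) = A \ {v} := by
  rw [Equiv.image_swap_of_mem_of_notMem (s := A \ {w}) ⟨hv, hvw⟩ (fun h => h.2 rfl),
    Set.insert_sdiff_singleton, Set.insert_eq_of_mem hw]

end Ambient

section Pruning

variable {V : Type*} {G : SimpleGraph V} {A S T : Set V}

def IsPrunedFrom (G : SimpleGraph V) (A S : Set V) : Prop :=
  Relation.ReflTransGen (PruneStep G) A S ∧ ∀ w : S, ¬OneVertexExtension (G.induce S) w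

theorem pruneStep_sdiff_singleton {v : V} (hvA : v ∈ A) (hv : OneVertexExtensionOn G A v) :
    PruneStep G A (A \ {v}) :=
  ⟨v, hvA, (oneVertexExtension_induce_iff hvA).2 hv, rfl⟩

theorem PruneStep.subset (h : PruneStep G A T) : T ⊆ A := by
  obtain ⟨v, -, -, rfl⟩ := h
  exact Set.sdiff_subset

theorem subset_of_reflTransGen_pruneStep (h : Relation.ReflTransGen (PruneStep G) A T) :
    T ⊆ A := by
  induction h with
  | refl => exact subset_rfl
  | tail _ hst ih => exact hst.subset.trans ih

def induceImageIso (π : V ≃ V) (hπ : ∀ x ∈ A, ∀ y ∈ A, G.Adj (π x) (π y) ↔ G.Adj x y) :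
    G.induce A ≃g G.induce (π '' A) where
  toEquiv := π.image A
  map_rel_iff' {a b} := hπ a a.2 b b.2

theorem PruneStep.image (π : V ≃ V) (hπ : ∀ x ∈ A, ∀ y ∈ A, G.Adj (π x) (π y) ↔ G.Adj x y)
    (h : PruneStep G A T) : PruneStep G (π '' A) (π '' T) := by
  obtain ⟨v, hv, hvA, rfl⟩ := h
  refine ⟨π v, Set.mem_image_of_mem π hv, hvA.map (induceImageIso π hπ), ?_⟩
  rw [Set.image_sdiff π.injective, Set.image_singleton]

theorem reflTransGen_pruneStep_image (π : V ≃ V)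
    (hπ : ∀ x ∈ A, ∀ y ∈ A, G.Adj (π x) (π y) ↔ G.Adj x y)
    (h : Relation.ReflTransGen (PruneStep G) A S) :
    Relation.ReflTransGen (PruneStep G) (π '' A) (π '' S) := by
  induction h with
  | refl => exact .refl
  | tail hAT hst ih =>
    have hTA := subset_of_reflTransGen_pruneStep hAT
    exact ih.tail (hst.image π fun x hx y hy => hπ x (hTA hx) y (hTA hy))

theorem IsPrunedFrom.image (π : V ≃ V)
    (hπ : ∀ x ∈ A, ∀ y ∈ A, G.Adj (π x) (π y) ↔ G.Adj x y) (h : IsPrunedFrom G A S) :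
    IsPrunedFrom G (π '' A) (π '' S) := by
  have hSA := subset_of_reflTransGen_pruneStep h.1
  have e := induceImageIso π fun x hx y hy => hπ x (hSA hx) y (hSA hy)
  exact ⟨reflTransGen_pruneStep_image π hπ h.1, fun w hw => h.2 _ (hw.map e.symm)⟩

theorem IsPrunedFrom.eq_or_pruneStep (h : IsPrunedFrom G A S) :
    S = A ∨ ∃ v ∈ A, OneVertexExtensionOn G A v ∧ IsPrunedFrom G (A \ {v}) S := by
  rcases h.1.cases_head with rfl | ⟨B, ⟨v, hvA, hv, rfl⟩, hchain⟩
  · exact .inl rfl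
  · exact .inr ⟨v, hvA, (oneVertexExtension_induce_iff hvA).1 hv, hchain, h.2⟩

theorem exists_isPrunedFrom [Finite V] (G : SimpleGraph V) (A : Set V) :
    ∃ S, IsPrunedFrom G A S := by
  induction A using WellFoundedLT.induction with
  | _ A ih =>
  by_cases hA : ∀ w : A, ¬OneVertexExtension (G.induce A) w
  · exact ⟨A, .refl, hA⟩
  · push Not at hA
    obtain ⟨⟨v, hvA⟩, hv⟩ := hA
    obtain ⟨S, hS⟩ := ih (A \ {v}) (Set.sdiff_singleton_ssubset.2 hvA)
    exact ⟨S, .head ⟨v, hvA, hv, rfl⟩ hS.1, hS.2⟩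

theorem exists_isPrunedFrom_sdiff_singleton_iso_of_twins [Finite V] [DecidableEq V] {v w : V}
    (hvA : v ∈ A) (hwA : w ∈ A) (hvw : v ≠ w)
    (htw : ∀ z ∈ A, z ≠ v → z ≠ w → (G.Adj v z ↔ G.Adj w z)) :
    ∃ P Q, IsPrunedFrom G (A \ {v}) P ∧ IsPrunedFrom G (A \ {w}) Q ∧
      Nonempty (G.induce P ≃g G.induce Q) := by
  obtain ⟨Q, hQ⟩ := exists_isPrunedFrom G (A \ {w})
  have hπ : ∀ {B}, B ⊆ A → ∀ x ∈ B, ∀ y ∈ B,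
      G.Adj (Equiv.swap v w x) (Equiv.swap v w y) ↔ G.Adj x y :=
    fun hB x hx y hy => adj_swap_swap_iff htw (hB hx) (hB hy)
  have hQA : Q ⊆ A := (subset_of_reflTransGen_pruneStep hQ.1).trans Set.sdiff_subset
  refine ⟨Equiv.swap v w '' Q, Q, ?_, hQ, ⟨(induceImageIso _ (hπ hQA)).symm⟩⟩
  rw [← image_swap_sdiff_singleton hvA hwA hvw]
  exact hQ.image _ (hπ Set.sdiff_subset)

theorem exists_isPrunedFrom_sdiff_singleton_eq [Finite V] {v w : V} (hvA : v ∈ A)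
    (hwA : w ∈ A) (hvw : v ≠ w) (hv : OneVertexExtensionOn G (A \ {w}) v)
    (hw : OneVertexExtensionOn G (A \ {v}) w) :
    ∃ P, IsPrunedFrom G (A \ {v}) P ∧ IsPrunedFrom G (A \ {w}) P := by
  obtain ⟨P, hP⟩ := exists_isPrunedFrom G ((A \ {v}) \ {w})
  refine ⟨P, ⟨.head (pruneStep_sdiff_singleton ⟨hwA, hvw.symm⟩ hw) hP.1, hP.2⟩,
    ⟨.head (pruneStep_sdiff_singleton ⟨hvA, hvw⟩ hv) ?_, hP.2⟩⟩
  rw [Set.sdiff_sdiff_comm]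
  exact hP.1

theorem exists_isPrunedFrom_sdiff_singleton_iso [Finite V] {v w : V} (hvA : v ∈ A)
    (hwA : w ∈ A) (hv : OneVertexExtensionOn G A v) (hw : OneVertexExtensionOn G A w) :
    ∃ P Q, IsPrunedFrom G (A \ {v}) P ∧ IsPrunedFrom G (A \ {w}) Q ∧
      Nonempty (G.induce P ≃g G.induce Q) := by
  classical
  rcases eq_or_ne v w with rfl | hvw
  · obtain ⟨P, hP⟩ := exists_isPrunedFrom G (A \ {v})
    exact ⟨P, P, hP, hP, ⟨Iso.refl⟩⟩
  rcases hv.sdiff_singleton_or_twins hvw with hv' | htw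
  · rcases hw.sdiff_singleton_or_twins hvw.symm with hw' | htw
    · obtain ⟨P, hP, hP'⟩ := exists_isPrunedFrom_sdiff_singleton_eq hvA hwA hvw hv' hw'
      exact ⟨P, P, hP, hP', ⟨Iso.refl⟩⟩
    · exact exists_isPrunedFrom_sdiff_singleton_iso_of_twins hvA hwA hvw
        fun z hz hzv hzw => (htw z hz hzw hzv).symm
  · exact exists_isPrunedFrom_sdiff_singleton_iso_of_twins hvA hwA hvw htw

theorem IsPrunedFrom.nonempty_iso [Finite V] {S₁ S₂ : Set V} (h₁ : IsPrunedFrom G A S₁)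
    (h₂ : IsPrunedFrom G A S₂) : Nonempty (G.induce S₁ ≃g G.induce S₂) := by
  induction A using WellFoundedLT.induction generalizing S₁ S₂ with
  | _ A ih =>
  rcases h₁.eq_or_pruneStep with rfl | ⟨v, hvA, hv, h₁⟩ <;>
    rcases h₂.eq_or_pruneStep with rfl | ⟨w, hwA, hw, h₂⟩
  · exact ⟨Iso.refl⟩
  · exact (h₁.2 ⟨w, hwA⟩ ((oneVertexExtension_induce_iff hwA).2 hw)).elim
  · exact (h₂.2 ⟨v, hvA⟩ ((oneVertexExtension_induce_iff hvA).2 hv)).elim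
  · obtain ⟨P, Q, hP, hQ, ⟨e⟩⟩ := exists_isPrunedFrom_sdiff_singleton_iso hvA hwA hv hw
    obtain ⟨e₁⟩ := ih _ (Set.sdiff_singleton_ssubset.2 hvA) h₁ hP
    obtain ⟨e₂⟩ := ih _ (Set.sdiff_singleton_ssubset.2 hwA) hQ h₂
    exact ⟨e₁.trans (e.trans e₂)⟩

end Pruning

/-- Every graph has a unique pruned subgraph up to isomorphism: if `G[S1]` and `G[S2]`
are both pruned subgraphs of `G`, then they are isomorphic. -/
theorem pruned_subgraph_unique {V : Type*} [Fintype V] (G : SimpleGraph V)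
    (S1 S2 : Set V) (h1 : IsPrunedSet G S1) (h2 : IsPrunedSet G S2) :
    Nonempty ((G.induce S1) ≃g (G.induce S2)) :=
  IsPrunedFrom.nonempty_iso h1 h2
end

section
/- Let G be a graph and let M1, M2 be disjoint nonempty modules of G such that every vertex of M1 is adjacent to every vertex of M2 and N_G(M1) = M2 (i.e., M1 has no neighbor outside M1 ∪ M2). Assume that the edge set of G[M1] equals a matching F1 and the edge set of G[M2] equals a matching F2 (so F1, F2 are the unique maximum matchings of G[M1], G[M2]). Let u1, …, uk be k distinct vertices of M1 exposed by F1, where k = min(number of F1-exposed vertices of M1, |M2|); let (w1, …, w_{n2}) be an ordering of M2 in which the F2-exposed vertices appear first and the two endpoints of each edge of F2 are consecutive; and let F_{1,2} = { {u_i, w_i} : 1 ≤ i ≤ k }. Then G has a maximum matching that contains all edges of F_{1,2}. -/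
/-!
Induction along the greedy order: given a maximum matching containing the first `i` edges
`u j w j`, an exchange along a short alternating path or cycle avoiding them brings in `u i w i`.
As `u i` is `F1`-exposed, its partner `z`, if any, lies in `M2`. If `u i` or `w i` is exposed, one
augmentation suffices. Otherwise let `y` be the partner of `w i`. If `y ∉ M2`, the module property
closes the alternating 4-cycle `z, u i, w i, y`. If `y ∈ M2`, then `w i` is `F2`-matched, so by the
ordering `z` is `F2`-matched to some `z'` beyond the prefix; `z'` is either exposed (augment along
`z', z, u i`, after which `u i` is exposed) or matched to some `m ∉ M2`, which by the module
property closes the alternating 6-cycle `z, u i, w i, y, m, z'`.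
-/

open SimpleGraph

/-- A vertex is matched by `F` if it is an endpoint of an edge of `F`. -/
def Matched {V : Type*} (F : Set (Sym2 V)) (v : V) : Prop := ∃ e ∈ F, v ∈ e

section Matching

variable {V : Type*} {G : SimpleGraph V} {F P D A : Set (Sym2 V)} {a b u w x : V}

theorem IsMatching.eq_of_mem (hF : IsMatching G F) {e f : Sym2 V} (he : e ∈ F) (hf : f ∈ F)
    (hve : x ∈ e) (hvf : x ∈ f) : e = f :=
  hF.2 e he f hf x hve hvf

theorem IsMatching.adj (hF : IsMatching G F) (h : s(a, b) ∈ F) : G.Adj a b :=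
  hF.1 h

theorem notMem_of_not_matched (hx : ¬Matched P x) {e : Sym2 V} (hxe : x ∈ e) : e ∉ P :=
  fun he => hx ⟨e, he, hxe⟩

theorem isMatching_singleton (h : G.Adj a b) : IsMatching G {s(a, b)} :=
  ⟨by simpa using h, fun e he f hf _ _ _ => he.trans hf.symm⟩

theorem subset_sdiff_union (hP : P ⊆ F) (hD : ∀ e ∈ D, ∃ x ∈ e, ¬Matched P x) :
    P ⊆ F \ D ∪ A := fun e he =>
  Or.inl ⟨hP he, fun heD => by
    obtain ⟨x, hxe, hx⟩ := hD e heD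
    exact notMem_of_not_matched hx hxe he⟩

theorem IsMatching.sdiff_union (hF : IsMatching G F) (hA : IsMatching G A)
    (hcov : ∀ e ∈ A, ∀ x ∈ e, ∀ f ∈ F, x ∈ f → f ∈ D) : IsMatching G (F \ D ∪ A) := by
  refine ⟨Set.union_subset (Set.sdiff_subset.trans hF.1) hA.1, ?_⟩
  rintro e (⟨he, heD⟩ | he) f (⟨hf, hfD⟩ | hf) x hxe hxf
  · exact hF.eq_of_mem he hf hxe hxf
  · exact absurd (hcov f hf x hxf e he hxe) heD
  · exact absurd (hcov e he x hxe f hf hxf) hfD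
  · exact hA.eq_of_mem he hf hxe hxf

theorem ncard_sdiff_union [Finite V] (hDF : D ⊆ F)
    (hcov : ∀ e ∈ A, ∀ x ∈ e, ∀ f ∈ F, x ∈ f → f ∈ D) :
    (F \ D ∪ A).ncard + D.ncard = F.ncard + A.ncard := by
  have hdisj : Disjoint (F \ D) A := Set.disjoint_right.2 fun e he heFD => by
    induction e using Sym2.ind with
    | _ x y => exact heFD.2 (hcov _ he x (Sym2.mem_mk_left x y) _ heFD.1 (Sym2.mem_mk_left x y))
  rw [Set.ncard_union_eq hdisj, add_right_comm, Set.ncard_sdiff_add_ncard_of_subset hDF]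

theorem IsMaximumMatching.sdiff_union [Finite V] (hF : IsMaximumMatching G F) (hDF : D ⊆ F)
    (hA : IsMatching G A) (hcov : ∀ e ∈ A, ∀ x ∈ e, ∀ f ∈ F, x ∈ f → f ∈ D)
    (hcard : D.ncard ≤ A.ncard) : IsMaximumMatching G (F \ D ∪ A) := by
  refine ⟨hF.1.sdiff_union hA hcov, fun F' hF' => (hF.2 F' hF').trans ?_⟩
  have := ncard_sdiff_union hDF hcov
  omega

theorem exists_isMaximumMatching [Finite V] (G : SimpleGraph V) : ∃ F, IsMaximumMatching G F := by
  have : Nonempty {F : Set (Sym2 V) // IsMatching G F} :=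
    ⟨⟨∅, Set.empty_subset _, fun _ he => he.elim⟩⟩
  obtain ⟨⟨F, hF⟩, hmax⟩ :=
    Finite.exists_max fun F : {F : Set (Sym2 V) // IsMatching G F} => F.1.ncard
  exact ⟨F, hF, fun F' hF' => hmax ⟨F', hF'⟩⟩

theorem IsMaximumMatching.matched_or_matched [Finite V] (hF : IsMaximumMatching G F)
    (hab : G.Adj a b) : Matched F a ∨ Matched F b := by
  by_contra! h
  have hcov : ∀ e ∈ ({s(a, b)} : Set (Sym2 V)), ∀ x ∈ e, ∀ f ∈ F, x ∈ f → f ∈ (∅ : Set _) := by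
    rintro e rfl x hx f hf hxf
    rcases Sym2.mem_iff.1 hx with rfl | rfl
    exacts [h.1 ⟨f, hf, hxf⟩, h.2 ⟨f, hf, hxf⟩]
  have hbig := hF.2 _ (hF.1.sdiff_union (isMatching_singleton hab) hcov)
  have := ncard_sdiff_union (Set.empty_subset F) hcov
  simp only [Set.ncard_empty, Set.ncard_singleton] at this
  omega

theorem IsMaximumMatching.augment [Finite V] (hF : IsMaximumMatching G F) (hab : s(a, b) ∈ F)
    (hx : ¬Matched F x) (hxa : G.Adj x a) :
    IsMaximumMatching G (F \ {s(a, b)} ∪ {s(x, a)}) ∧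
      ¬Matched (F \ {s(a, b)} ∪ {s(x, a)}) b := by
  have hcov : ∀ e ∈ ({s(x, a)} : Set (Sym2 V)), ∀ y ∈ e, ∀ f ∈ F, y ∈ f →
      f ∈ ({s(a, b)} : Set (Sym2 V)) := by
    rintro e rfl y hy f hf hyf
    rcases Sym2.mem_iff.1 hy with rfl | rfl
    exacts [absurd ⟨f, hf, hyf⟩ hx, hF.1.eq_of_mem hf hab hyf (Sym2.mem_mk_left _ _)]
  refine ⟨hF.sdiff_union (by simpa using hab) (isMatching_singleton hxa) hcov (by simp), ?_⟩
  rintro ⟨f, ⟨hf, hfab⟩ | rfl, hbf⟩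
  · exact hfab (hF.1.eq_of_mem hf hab hbf (Sym2.mem_mk_right _ _))
  · rcases Sym2.mem_iff.1 hbf with rfl | rfl
    · exact hx ⟨_, hab, Sym2.mem_mk_right _ _⟩
    · exact (hF.1.adj hab).ne rfl

theorem IsMaximumMatching.exists_of_not_matched [Finite V] (hF : IsMaximumMatching G F) (hP : P ⊆ F)
    (huw : G.Adj u w) (hu : ¬Matched F u) (hwP : ¬Matched P w) :
    ∃ F', IsMaximumMatching G F' ∧ P ⊆ F' ∧ s(u, w) ∈ F' := by
  obtain ⟨_, hwy, hw⟩ := (hF.matched_or_matched huw).resolve_left hu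
  obtain ⟨y, rfl⟩ := Sym2.mem_iff_exists.1 hw
  refine ⟨_, (hF.augment hwy hu huw).1, subset_sdiff_union hP ?_, Or.inr rfl⟩
  rintro _ rfl
  exact ⟨w, Sym2.mem_mk_left _ _, hwP⟩

/-- Exchange along the alternating cycle `a 0, b 0, a 1, b 1, …, a (n-1), b (n-1)`. -/
theorem IsMaximumMatching.rotate [Finite V] {n : ℕ} [NeZero n] (hF : IsMaximumMatching G F)
    (a b : Fin n → V) (hmem : ∀ i, s(a i, b i) ∈ F)
    (hinj : Function.Injective fun i => s(a i, b i)) (hadj : ∀ i, G.Adj (b i) (a (i + 1))) :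
    IsMaximumMatching G
      (F \ Set.range (fun i => s(a i, b i)) ∪ Set.range (fun i => s(b i, a (i + 1)))) := by
  have hidx {i j : Fin n} {x : V} (hi : x ∈ s(a i, b i)) (hj : x ∈ s(a j, b j)) : i = j :=
    hinj (hF.1.eq_of_mem (hmem i) (hmem j) hi hj)
  have hab (i : Fin n) : a i ≠ b i := (hF.1.adj (hmem i)).ne
  have hidx' {i j : Fin n} {x : V} (hi : x ∈ s(b i, a (i + 1))) (hj : x ∈ s(b j, a (j + 1))) :
      i = j := by
    rcases Sym2.mem_iff.1 hi with rfl | rfl <;> rcases Sym2.mem_iff.1 hj with h | h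
    · exact hidx (j := j) (Sym2.mem_mk_right _ _) (Sym2.mem_iff.2 (Or.inr h))
    · obtain rfl := hidx (j := j + 1) (Sym2.mem_mk_right _ _) (Sym2.mem_iff.2 (Or.inl h))
      exact absurd h.symm (hab _)
    · obtain rfl := hidx (j := j) (Sym2.mem_mk_left _ _) (Sym2.mem_iff.2 (Or.inr h))
      exact absurd h (hab _)
    · exact add_right_cancel
        (hidx (j := j + 1) (Sym2.mem_mk_left _ _) (Sym2.mem_iff.2 (Or.inl h)))
  have hinj' : Function.Injective fun i => s(b i, a (i + 1)) := fun i j h => by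
    have h : s(b i, a (i + 1)) = s(b j, a (j + 1)) := h
    exact hidx' (Sym2.mem_mk_left _ _) (h ▸ Sym2.mem_mk_left _ _)
  refine hF.sdiff_union (Set.range_subset_iff.2 hmem) ⟨Set.range_subset_iff.2 hadj, ?_⟩ ?_
    (by rw [Set.ncard_range_of_injective hinj, Set.ncard_range_of_injective hinj'])
  · rintro _ ⟨i, rfl⟩ _ ⟨j, rfl⟩ x hi hj
    rw [hidx' hi hj]
  · rintro _ ⟨i, rfl⟩ x hx f hf hxf
    rcases Sym2.mem_iff.1 hx with rfl | rfl
    · exact ⟨i, hF.1.eq_of_mem (hmem i) hf (Sym2.mem_mk_right _ _) hxf⟩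
    · exact ⟨i + 1, hF.1.eq_of_mem (hmem _) hf (Sym2.mem_mk_left _ _) hxf⟩

theorem IsMaximumMatching.exists_rotate [Finite V] {n : ℕ} [NeZero n]
    (hF : IsMaximumMatching G F) (hP : P ⊆ F)
    (a b : Fin n → V) (hmem : ∀ i, s(a i, b i) ∈ F)
    (hinj : Function.Injective fun i => s(a i, b i)) (hadj : ∀ i, G.Adj (b i) (a (i + 1)))
    (hfree : ∀ i, ∃ x ∈ s(a i, b i), ¬Matched P x) :
    ∃ F', IsMaximumMatching G F' ∧ P ⊆ F' ∧ s(b 0, a 1) ∈ F' :=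
  ⟨_, hF.rotate a b hmem hinj hadj, subset_sdiff_union hP (Set.forall_mem_range.2 hfree),
    Or.inr ⟨0, by simp only [zero_add]⟩⟩

end Matching

section Pendant

variable {V : Type*} {G : SimpleGraph V} {M1 M2 : Set V} {F1 F2 F P : Set (Sym2 V)}
  {m u w y z z' : V}

theorem mem_of_adj_of_not_matched (hpend : ∀ u ∈ M1, ∀ w : V, G.Adj u w → w ∈ M1 ∪ M2)
    (hE1 : (inducedOn G M1).edgeSet ⊆ F1) (hu : u ∈ M1) (hu1 : ¬Matched F1 u) {v : V}
    (h : G.Adj u v) : v ∈ M2 :=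
  (hpend u hu v h).resolve_left fun hv => hu1 ⟨s(u, v), hE1 ⟨h, hu, hv⟩, Sym2.mem_mk_left _ _⟩

theorem partner_notMem_of_partner_mem (hjoin : ∀ u ∈ M1, ∀ w ∈ M2, G.Adj u w)
    (hF2 : IsMatching (inducedOn G M2) F2) (hE2 : (inducedOn G M2).edgeSet ⊆ F2)
    (hF : IsMatching G F) (hu : u ∈ M1) (hzu : s(z, u) ∈ F) (hzz' : s(z, z') ∈ F2)
    (hz'm : s(z', m) ∈ F) : m ∉ M2 := by
  intro hm
  obtain ⟨-, -, hz'⟩ := hF2.adj hzz'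
  have h := hF2.eq_of_mem (hE2 (show (inducedOn G M2).Adj z' m from ⟨hF.adj hz'm, hz', hm⟩))
    hzz' (Sym2.mem_mk_left _ _) (Sym2.mem_mk_right _ _)
  have h' := hF.eq_of_mem hzu hz'm (Sym2.mem_mk_left _ _) (h ▸ Sym2.mem_mk_left _ _)
  rcases Sym2.mem_iff.1 (h' ▸ Sym2.mem_mk_right z u : u ∈ s(z', m)) with rfl | rfl
  exacts [(hjoin u hu u hz').ne rfl, (hjoin u hu u hm).ne rfl]

theorem exists_isMaximumMatching_of_partner_mem [Finite V] (hM2 : IsModule G M2)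
    (hjoin : ∀ u ∈ M1, ∀ w ∈ M2, G.Adj u w)
    (hF2 : IsMatching (inducedOn G M2) F2) (hE2 : (inducedOn G M2).edgeSet ⊆ F2)
    (hF : IsMaximumMatching G F) (hP : P ⊆ F)
    (hu : u ∈ M1) (huP : ¬Matched P u) (hw : w ∈ M2) (hwP : ¬Matched P w)
    (hexp : Matched F2 w → ∀ z ∈ M2, ¬Matched P z → Matched F2 z)
    (hcl : ∀ z ∈ M2, ∀ z' ∈ M2, s(z, z') ∈ F2 → z ≠ w → ¬Matched P z → ¬Matched P z')
    (hzu : s(z, u) ∈ F) (hwy : s(w, y) ∈ F) (hz : z ∈ M2) (hzw : z ≠ w) (hy : y ∈ M2) :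
    ∃ F', IsMaximumMatching G F' ∧ P ⊆ F' ∧ s(u, w) ∈ F' := by
  have hne {a b : V} (ha : a ∈ M1) (hb : b ∈ M2) : a ≠ b := (hjoin a ha b hb).ne
  have hzP : ¬Matched P z := fun ⟨f, hf, hzf⟩ => huP ⟨f, hf,
    hF.1.eq_of_mem hzu (hP hf) (Sym2.mem_mk_left _ _) hzf ▸ Sym2.mem_mk_right _ _⟩
  have hwyF2 : s(w, y) ∈ F2 := hE2 (show (inducedOn G M2).Adj w y from ⟨hF.1.adj hwy, hw, hy⟩)
  obtain ⟨_, hzz', hz_mem⟩ := hexp ⟨_, hwyF2, Sym2.mem_mk_left _ _⟩ z hz hzP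
  obtain ⟨z', rfl⟩ := Sym2.mem_iff_exists.1 hz_mem
  obtain ⟨hz'z, -, hz'⟩ := hF2.adj hzz'
  have hz'P : ¬Matched P z' := hcl z hz z' hz' hzz' hzw hzP
  by_cases hz'F : Matched F z'
  · obtain ⟨_, hz'm, hz'_mem⟩ := hz'F
    obtain ⟨m, rfl⟩ := Sym2.mem_iff_exists.1 hz'_mem
    have hm : m ∉ M2 := partner_notMem_of_partner_mem hjoin hF2 hE2 hF.1 hu hzu hzz' hz'm
    have h12 : s(z, u) ≠ s(w, y) := (ne_of_mem_of_not_mem' (Sym2.mem_mk_left _ _) (by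
      simp only [Sym2.mem_iff, not_or]; exact ⟨hzw.symm, (hne hu hw).symm⟩)).symm
    have h13 : s(z, u) ≠ s(m, z') := (ne_of_mem_of_not_mem' (Sym2.mem_mk_right _ _) (by
      simp only [Sym2.mem_iff, not_or]; exact ⟨hz'z.ne.symm, (hne hu hz').symm⟩)).symm
    have h23 : s(w, y) ≠ s(m, z') := (ne_of_mem_of_not_mem' (Sym2.mem_mk_left _ _) (by
      simp only [Sym2.mem_iff, not_or]; exact ⟨fun h => hm (h ▸ hw), fun h => hm (h ▸ hy)⟩)).symm
    have hym : G.Adj y m := (hM2 z' hz' y hy m hm).1 (hF.1.adj hz'm)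
    refine hF.exists_rotate hP ![z, w, m] ![u, y, z'] ?_ ?_ ?_ ?_ <;> intro i
    · fin_cases i
      exacts [hzu, hwy, Sym2.eq_swap ▸ hz'm]
    · intro j h
      fin_cases i <;> fin_cases j <;> first | rfl | exact absurd h ‹_› | exact absurd h.symm ‹_›
    · fin_cases i
      exacts [hjoin u hu w hw, hym, hz'z.symm]
    · fin_cases i
      exacts [⟨u, Sym2.mem_mk_right _ _, huP⟩, ⟨w, Sym2.mem_mk_left _ _, hwP⟩,
        ⟨z', Sym2.mem_mk_right _ _, hz'P⟩]
  · obtain ⟨hF', hu'⟩ := hF.augment hzu hz'F hz'z.symm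
    exact hF'.exists_of_not_matched
      (subset_sdiff_union hP (by rintro _ rfl; exact ⟨u, Sym2.mem_mk_right _ _, huP⟩))
      (hjoin u hu w hw) hu' hwP

theorem exists_isMaximumMatching_of_pendant [Finite V] (hM2 : IsModule G M2)
    (hjoin : ∀ u ∈ M1, ∀ w ∈ M2, G.Adj u w)
    (hpend : ∀ u ∈ M1, ∀ w : V, G.Adj u w → w ∈ M1 ∪ M2) (hE1 : (inducedOn G M1).edgeSet ⊆ F1)
    (hF2 : IsMatching (inducedOn G M2) F2) (hE2 : (inducedOn G M2).edgeSet ⊆ F2)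
    (hF : IsMaximumMatching G F) (hP : P ⊆ F)
    (hu : u ∈ M1) (hu1 : ¬Matched F1 u) (huP : ¬Matched P u) (hw : w ∈ M2) (hwP : ¬Matched P w)
    (hexp : Matched F2 w → ∀ z ∈ M2, ¬Matched P z → Matched F2 z)
    (hcl : ∀ z ∈ M2, ∀ z' ∈ M2, s(z, z') ∈ F2 → z ≠ w → ¬Matched P z → ¬Matched P z') :
    ∃ F', IsMaximumMatching G F' ∧ P ⊆ F' ∧ s(u, w) ∈ F' := by
  have huw := hjoin u hu w hw
  by_cases huF : Matched F u; swap
  · exact hF.exists_of_not_matched hP huw huF hwP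
  by_cases hwF : Matched F w; swap
  · simpa only [Sym2.eq_swap] using hF.exists_of_not_matched hP huw.symm hwF huP
  obtain ⟨_, huz, hu_mem⟩ := huF
  obtain ⟨z, rfl⟩ := Sym2.mem_iff_exists.1 hu_mem
  obtain ⟨_, hwy, hw_mem⟩ := hwF
  obtain ⟨y, rfl⟩ := Sym2.mem_iff_exists.1 hw_mem
  by_cases hzw : z = w
  · exact ⟨F, hF, hP, hzw ▸ huz⟩
  have hz : z ∈ M2 := mem_of_adj_of_not_matched hpend hE1 hu hu1 (hF.1.adj huz)
  rw [Sym2.eq_swap] at huz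
  by_cases hy : y ∈ M2
  · exact exists_isMaximumMatching_of_partner_mem hM2 hjoin hF2 hE2 hF hP hu huP hw hwP hexp hcl
      huz hwy hz hzw hy
  have hyz : G.Adj y z := by
    by_cases hy1 : y ∈ M1
    · exact hjoin y hy1 z hz
    · exact ((hM2 w hw z hz y hy).1 (hF.1.adj hwy)).symm
  refine hF.exists_rotate hP ![z, w] ![u, y] ?_ ?_ ?_ ?_ <;> intro i
  · fin_cases i
    exacts [huz, hwy]
  · intro j h
    have h12 : s(z, u) ≠ s(w, y) := (ne_of_mem_of_not_mem' (Sym2.mem_mk_left _ _) (by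
      simp only [Sym2.mem_iff, not_or]; exact ⟨Ne.symm hzw, huw.ne.symm⟩)).symm
    fin_cases i <;> fin_cases j <;> first | rfl | exact absurd h ‹_› | exact absurd h.symm ‹_›
  · fin_cases i
    exacts [huw, hyz]
  · fin_cases i
    exacts [⟨u, Sym2.mem_mk_right _ _, huP⟩, ⟨w, Sym2.mem_mk_left _ _, hwP⟩]

end Pendant

section Ordering

variable {V : Type*} {k n : ℕ} (hkn : k ≤ n) {u : Fin k → V} {w : Fin n → V}

/-- The edges of `F_{1,2}` of index below `i`. -/
def prefixEdges (u : Fin k → V) (w : Fin n → V) (i : ℕ) : Set (Sym2 V) :=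
  (fun j => s(u j, w (Fin.castLE hkn j))) '' {j | (j : ℕ) < i}

theorem prefixEdges_succ {i : ℕ} (hi : i < k) :
    prefixEdges hkn u w (i + 1) =
      insert s(u ⟨i, hi⟩, w (Fin.castLE hkn ⟨i, hi⟩)) (prefixEdges hkn u w i) := by
  ext e
  simp only [prefixEdges, Set.mem_image, Set.mem_ofPred_eq, Set.mem_insert_iff,
    Nat.lt_succ_iff_lt_or_eq]
  constructor
  · rintro ⟨j, hj | hj, rfl⟩
    · exact Or.inr ⟨j, hj, rfl⟩
    · obtain rfl : j = ⟨i, hi⟩ := Fin.ext hj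
      exact Or.inl rfl
  · rintro (rfl | ⟨j, hj, rfl⟩)
    exacts [⟨⟨i, hi⟩, Or.inr rfl, rfl⟩, ⟨j, Or.inl hj, rfl⟩]

theorem not_matched_prefixEdges_left (hu_inj : Function.Injective u) (hne : ∀ j l, u j ≠ w l)
    {i : ℕ} (j : Fin k) (hij : i ≤ j) : ¬Matched (prefixEdges hkn u w i) (u j) := by
  rintro ⟨_, ⟨l, hl, rfl⟩, h⟩
  rcases Sym2.mem_iff.1 h with h | h
  · exact absurd (hu_inj h ▸ hl : (j : ℕ) < i) (not_lt.2 hij)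
  · exact hne j _ h

theorem matched_prefixEdges_right_iff (hw_inj : Function.Injective w) (hne : ∀ j l, u j ≠ w l)
    {i : ℕ} (hi : i ≤ k) (p : Fin n) : Matched (prefixEdges hkn u w i) (w p) ↔ (p : ℕ) < i := by
  constructor
  · rintro ⟨_, ⟨l, hl, rfl⟩, h⟩
    rcases Sym2.mem_iff.1 h with h | h
    · exact absurd h.symm (hne l p)
    · exact (congrArg Fin.val (hw_inj h)).trans_lt hl
  · intro hp
    exact ⟨_, ⟨⟨p, by omega⟩, hp, rfl⟩, Sym2.mem_mk_right _ _⟩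

theorem le_succ_of_mem_consec {F2 : Set (Sym2 V)} (hw_inj : Function.Injective w)
    (hw_consec : ∀ e ∈ F2, ∃ (i : Fin n) (h : (i : ℕ) + 1 < n), e = s(w i, w ⟨(i : ℕ) + 1, h⟩))
    {p q : Fin n} (h : s(w p, w q) ∈ F2) : (p : ℕ) ≤ q + 1 := by
  obtain ⟨m, hm, he⟩ := hw_consec _ h
  rcases Sym2.eq_iff.1 he with ⟨hp, hq⟩ | ⟨hp, hq⟩
  all_goals obtain rfl := hw_inj hp; obtain rfl := hw_inj hq
  exacts [Nat.le_succ_of_le (Nat.le_succ _), le_rfl]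

theorem matched_of_not_matched_prefixEdges {F2 : Set (Sym2 V)} (hw_inj : Function.Injective w)
    (hne : ∀ j l, u j ≠ w l)
    (hw_exp_first : ∀ i j : Fin n, ¬Matched F2 (w i) → Matched F2 (w j) → i < j)
    {i : ℕ} (hi : i < k) (hwi : Matched F2 (w (Fin.castLE hkn ⟨i, hi⟩))) :
    ∀ z ∈ Set.range w, ¬Matched (prefixEdges hkn u w i) z → Matched F2 z := by
  rintro _ ⟨p, rfl⟩ hp
  by_contra h
  exact (matched_prefixEdges_right_iff hkn hw_inj hne hi.le p).not.1 hp (hw_exp_first p _ h hwi)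

theorem not_matched_prefixEdges_of_mem {F2 : Set (Sym2 V)} (hw_inj : Function.Injective w)
    (hne : ∀ j l, u j ≠ w l)
    (hw_consec : ∀ e ∈ F2, ∃ (i : Fin n) (h : (i : ℕ) + 1 < n), e = s(w i, w ⟨(i : ℕ) + 1, h⟩))
    {i : ℕ} (hi : i < k) :
    ∀ z ∈ Set.range w, ∀ z' ∈ Set.range w, s(z, z') ∈ F2 → z ≠ w (Fin.castLE hkn ⟨i, hi⟩) →
      ¬Matched (prefixEdges hkn u w i) z → ¬Matched (prefixEdges hkn u w i) z' := by
  rintro _ ⟨p, rfl⟩ _ ⟨q, rfl⟩ hpq hpi hp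
  have hpq := le_succ_of_mem_consec hw_inj hw_consec hpq
  have hpi : (p : ℕ) ≠ i := fun h => hpi (congrArg w (Fin.ext h))
  rw [matched_prefixEdges_right_iff hkn hw_inj hne hi.le] at hp ⊢
  omega

end Ordering

theorem pendant_greedy_general {V : Type*} [Fintype V] (G : SimpleGraph V) (M1 M2 : Set V)
    (hM2 : IsModule G M2)
    (hjoin : ∀ u ∈ M1, ∀ w ∈ M2, G.Adj u w)
    (hpend : ∀ u ∈ M1, ∀ w : V, G.Adj u w → w ∈ M1 ∪ M2)
    (F1 F2 : Set (Sym2 V))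
    (hE1 : (inducedOn G M1).edgeSet = F1)
    (hF2 : IsMatching (inducedOn G M2) F2) (hE2 : (inducedOn G M2).edgeSet = F2)
    (k n2 : ℕ)
    (hkn : k ≤ n2)
    (u : Fin k → V) (hu_inj : Function.Injective u)
    (hu_mem : ∀ i, u i ∈ M1) (hu_exp : ∀ i, ¬Matched F1 (u i))
    (w : Fin n2 → V) (hw_inj : Function.Injective w)
    (hw_range : Set.range w = M2)
    (hw_exp_first : ∀ i j : Fin n2, ¬Matched F2 (w i) → Matched F2 (w j) → i < j)
    (hw_consec : ∀ e ∈ F2, ∃ (i : Fin n2) (h : (i : ℕ) + 1 < n2),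
      e = s(w i, w ⟨(i : ℕ) + 1, h⟩)) :
    ∃ F : Set (Sym2 V), IsMaximumMatching G F ∧
      ∀ i : Fin k, s(u i, w (Fin.castLE hkn i)) ∈ F := by
  subst hw_range
  have hne (j : Fin k) (l : Fin n2) : u j ≠ w l := (hjoin _ (hu_mem j) _ ⟨l, rfl⟩).ne
  suffices ∀ i ≤ k, ∃ F, IsMaximumMatching G F ∧ prefixEdges hkn u w i ⊆ F by
    obtain ⟨F, hF, hPF⟩ := this k le_rfl
    exact ⟨F, hF, fun j => hPF ⟨j, j.isLt, rfl⟩⟩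
  intro i hi
  induction i with
  | zero =>
    obtain ⟨F, hF⟩ := exists_isMaximumMatching G
    exact ⟨F, hF, by simp [prefixEdges]⟩
  | succ i ih =>
    obtain ⟨F, hF, hPF⟩ := ih (by omega)
    let I : Fin k := ⟨i, hi⟩
    obtain ⟨F', hF', hPF', hnew⟩ := exists_isMaximumMatching_of_pendant hM2 hjoin hpend
      hE1.subset hF2 hE2.subset hF hPF (hu_mem I) (hu_exp I)
      (not_matched_prefixEdges_left hkn hu_inj hne I le_rfl) ⟨Fin.castLE hkn I, rfl⟩
      ((matched_prefixEdges_right_iff hkn hw_inj hne (Nat.le_of_succ_le hi) _).not.2 (lt_irrefl i))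
      (matched_of_not_matched_prefixEdges hkn hw_inj hne hw_exp_first hi)
      (not_matched_prefixEdges_of_mem hkn hw_inj hne hw_consec hi)
    exact ⟨F', hF', prefixEdges_succ hkn hi ▸ Set.insert_subset hnew hPF'⟩

/-- Greedy matching for a pendant module: `M1, M2` are disjoint nonempty modules joined
completely, `M1` has no neighbour outside `M1 ∪ M2`, and `G[M1]`, `G[M2]` have edge sets
equal to matchings `F1`, `F2`. If `u 0, …, u (k-1)` are `k` distinct `F1`-exposed vertices
of `M1`, where `k = min(#exposed vertices of M1, |M2|)`, and `w` is a canonical ordering of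
`M2` (exposed vertices first, endpoints of each edge of `F2` consecutive), then `G` has a
maximum matching containing every edge `{u i, w i}` for `i < k`. -/
theorem pendant_greedy {V : Type*} [Fintype V] (G : SimpleGraph V) (M1 M2 : Set V)
    (hM1 : IsModule G M1) (hM2 : IsModule G M2)
    (hd : Disjoint M1 M2) (hne1 : M1.Nonempty) (hne2 : M2.Nonempty)
    (hjoin : ∀ u ∈ M1, ∀ w ∈ M2, G.Adj u w)
    (hpend : ∀ u ∈ M1, ∀ w : V, G.Adj u w → w ∈ M1 ∪ M2)
    (F1 F2 : Set (Sym2 V))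
    (hF1 : IsMatching (inducedOn G M1) F1) (hE1 : (inducedOn G M1).edgeSet = F1)
    (hF2 : IsMatching (inducedOn G M2) F2) (hE2 : (inducedOn G M2).edgeSet = F2)
    (k n2 : ℕ)
    (hk : k = min ((M1 \ {v | Matched F1 v}).ncard) M2.ncard)
    (hn2 : n2 = M2.ncard) (hkn : k ≤ n2)
    (u : Fin k → V) (hu_inj : Function.Injective u)
    (hu_mem : ∀ i, u i ∈ M1) (hu_exp : ∀ i, ¬Matched F1 (u i))
    (w : Fin n2 → V) (hw_inj : Function.Injective w)
    (hw_range : Set.range w = M2)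
    (hw_exp_first : ∀ i j : Fin n2, ¬Matched F2 (w i) → Matched F2 (w j) → i < j)
    (hw_consec : ∀ e ∈ F2, ∃ (i : Fin n2) (h : (i : ℕ) + 1 < n2),
      e = s(w i, w ⟨(i : ℕ) + 1, h⟩)) :
    ∃ F : Set (Sym2 V), IsMaximumMatching G F ∧
      ∀ i : Fin k, s(u i, w (Fin.castLE hkn i)) ∈ F :=
  pendant_greedy_general G M1 M2 hM2 hjoin hpend F1 F2 hE1 hF2 hE2 k n2 hkn u hu_inj hu_mem hu_exp w
    hw_inj hw_range hw_exp_first hw_consec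
end
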